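/- arXiv:1709.07290 — 6 statements merged into one kernel-verified Lean document; each statement's English description precedes it below -/
import Mathlib

section
/- For every A ∈ Ω and rows 1 ≤ i < j ≤ m, the (i,j)-binomial neighborhood of A has cardinality |N_ij(A)| = C(u_ij(A) + l_ij(A), u_ij(A)), the binomial coefficient choosing u_ij(A) elements out of u_ij(A) + l_ij(A). -/
open Finset

attribute [local instance] Classical.propDecidable

/-- A binary `m × n` matrix, with `true` representing a `1` entry. -/
abbrev BinMat (m n : ℕ) := Fin m → Fin n → Bool

/-- `A ∈ Ω(r,c,F)`: the binary matrix `A` has row sums `r`, column sums `c`, and is zero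
on the forbidden entries `F`. -/
def inOmega {m n : ℕ} (r : Fin m → ℕ) (c : Fin n → ℕ) (F : Finset (Fin m × Fin n))
    (A : BinMat m n) : Prop :=
  (∀ i : Fin m, (univ.filter fun k => A i k = true).card = r i) ∧
  (∀ k : Fin n, (univ.filter fun i => A i k = true).card = c k) ∧
  ∀ p ∈ F, A p.1 p.2 = false

/-- `U_ij(A)`: columns with a `1` in row `i`, a `0` in row `j`, and `(j,k)` not forbidden. -/
def Uset {m n : ℕ} (F : Finset (Fin m × Fin n)) (i j : Fin m) (A : BinMat m n) :
    Finset (Fin n) :=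
  univ.filter fun k => A i k = true ∧ A j k = false ∧ (j, k) ∉ F

/-- `L_ij(A)`: columns with a `0` in row `i`, a `1` in row `j`, and `(i,k)` not forbidden. -/
def Lset {m n : ℕ} (F : Finset (Fin m × Fin n)) (i j : Fin m) (A : BinMat m n) :
    Finset (Fin n) :=
  univ.filter fun k => A i k = false ∧ A j k = true ∧ (i, k) ∉ F

/-- `u_ij(A) = |U_ij(A)|`. -/
def usize {m n : ℕ} (F : Finset (Fin m × Fin n)) (i j : Fin m) (A : BinMat m n) : ℕ :=
  (Uset F i j A).card

/-- `l_ij(A) = |L_ij(A)|`. -/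
def lsize {m n : ℕ} (F : Finset (Fin m × Fin n)) (i j : Fin m) (A : BinMat m n) : ℕ :=
  (Lset F i j A).card

/-- `B ∈ N_ij(A)`: `B ∈ Ω` and `B` agrees with `A` outside `{i,j} × (U_ij(A) ∪ L_ij(A))`. -/
def inNbhd {m n : ℕ} (r : Fin m → ℕ) (c : Fin n → ℕ) (F : Finset (Fin m × Fin n))
    (i j : Fin m) (A B : BinMat m n) : Prop :=
  inOmega r c F B ∧
  ∀ k l, (k, l) ∉ (({i, j} : Finset (Fin m)) ×ˢ (Uset F i j A ∪ Lset F i j A)) →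
    B k l = A k l

/-!
Write `S = U_ij(A) ∪ L_ij(A)`. On the columns of `S` the rows `i` and `j` of `A` are
complementary and avoid `F`. A matrix `B` agreeing with `A` off `{i, j} × S` then has the
column sums of `A` iff its rows `i` and `j` are complementary on `S`, and, given that, the row
sums of `A` iff row `i` of `B` has exactly `u_ij(A)` ones on `S`. Hence `B ↦ {l ∈ S | B i l}`
is a bijection from `N_ij(A)` onto the `u_ij(A)`-subsets of `S`; its inverse is `fillRows`.
-/

section Counting

variable {α : Type*}

theorem card_filter_univ_eq_iff_of_compl [Fintype α] {s : Finset α} {p q : α → Prop}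
    [DecidablePred p] [DecidablePred q] (h : ∀ x ∉ s, p x ↔ q x) :
    #(univ.filter p) = #(univ.filter q) ↔ #(s.filter p) = #(s.filter q) := by
  have split (t : α → Prop) [DecidablePred t] :
      #(univ.filter t) = #(s.filter t) + #(sᶜ.filter t) := by
    rw [← card_union_of_disjoint (disjoint_filter_filter disjoint_compl_right),
      ← filter_union, union_compl]
  rw [split p, split q, filter_congr fun x hx => h x (mem_compl.mp hx), Nat.add_right_cancel_iff]

theorem card_filter_pair [DecidableEq α] {i j : α} (hij : i ≠ j) (f : α → Bool) :
    #(({i, j} : Finset α).filter fun k => f k = true) = (f i).toNat + (f j).toNat := by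
  rw [filter_insert, filter_singleton]
  cases f i <;> cases f j <;> simp [hij]

theorem card_filter_eq_sub_of_eq_not {s : Finset α} {f g : α → Bool} (h : ∀ x ∈ s, g x = !f x) :
    #(s.filter fun x => g x = true) = #s - #(s.filter fun x => f x = true) := by
  rw [← card_filter_add_card_filter_not (s := s) (fun x => f x = true), Nat.add_sub_cancel_left]
  congr 1
  exact filter_congr fun x hx => by simp [h x hx]

end Counting

section FillRows

variable {m n : ℕ}

def fillRows (A : BinMat m n) (i j : Fin m) (S T : Finset (Fin n)) : BinMat m n := fun k l =>
  if l ∈ S ∧ k = i then decide (l ∈ T) else if l ∈ S ∧ k = j then !decide (l ∈ T) else A k l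

variable {A B : BinMat m n} {i j k : Fin m} {l : Fin n} {S T : Finset (Fin n)}

theorem fillRows_left (hl : l ∈ S) : fillRows A i j S T i l = decide (l ∈ T) := by
  simp [fillRows, hl]

theorem fillRows_right (hij : i ≠ j) (hl : l ∈ S) : fillRows A i j S T j l = !decide (l ∈ T) := by
  simp [fillRows, hl, hij.symm]

theorem fillRows_of_notMem (h : (k, l) ∉ ({i, j} : Finset (Fin m)) ×ˢ S) :
    fillRows A i j S T k l = A k l := by
  simp only [mem_product, mem_insert, mem_singleton, not_and_or, not_or] at h
  unfold fillRows
  rw [if_neg, if_neg] <;> tauto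

theorem filter_fillRows_left (hT : T ⊆ S) :
    S.filter (fun l => fillRows A i j S T i l = true) = T := by
  ext l
  constructor
  · intro hl
    obtain ⟨hlS, hlT⟩ := mem_filter.1 hl
    rw [fillRows_left hlS] at hlT
    exact of_decide_eq_true hlT
  · intro hl
    rw [mem_filter, fillRows_left (hT hl)]
    exact ⟨hT hl, decide_eq_true hl⟩

theorem fillRows_injOn : Set.InjOn (fillRows A i j S) {T | T ⊆ S} := fun T hT T' hT' h => by
  rw [← filter_fillRows_left (i := i) (j := j) (A := A) hT, h, filter_fillRows_left hT']

theorem eq_fillRows (hij : i ≠ j)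
    (hBA : ∀ k l, (k, l) ∉ ({i, j} : Finset (Fin m)) ×ˢ S → B k l = A k l)
    (hB : ∀ l ∈ S, B j l = !B i l) :
    B = fillRows A i j S (S.filter fun l => B i l = true) := by
  funext k l
  by_cases hkl : (k, l) ∈ ({i, j} : Finset (Fin m)) ×ˢ S
  · obtain ⟨hk, hl⟩ : k ∈ ({i, j} : Finset (Fin m)) ∧ l ∈ S := mem_product.1 hkl
    rcases mem_insert.1 hk with rfl | hk
    · rw [fillRows_left hl]
      simp [hl]
    · rw [mem_singleton.1 hk, fillRows_right hij hl, hB l hl]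
      simp [hl]
  · rw [fillRows_of_notMem hkl, hBA k l hkl]

end FillRows

section Sums

variable {m n : ℕ} {A B : BinMat m n} {i j : Fin m} {S : Finset (Fin n)}

theorem colSums_eq_iff (hij : i ≠ j)
    (hBA : ∀ k l, (k, l) ∉ ({i, j} : Finset (Fin m)) ×ˢ S → B k l = A k l)
    (hA : ∀ l ∈ S, A j l = !A i l) :
    (∀ l, #(univ.filter fun k => B k l = true) = #(univ.filter fun k => A k l = true)) ↔
      ∀ l ∈ S, B j l = !B i l := by
  have col (l : Fin n) :
      #(univ.filter fun k => B k l = true) = #(univ.filter fun k => A k l = true) ↔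
        (B i l).toNat + (B j l).toNat = (A i l).toNat + (A j l).toNat := by
    rw [card_filter_univ_eq_iff_of_compl (s := {i, j}) fun k hk => by rw [hBA k l (by simp [hk])],
      card_filter_pair hij, card_filter_pair hij]
  simp only [col]
  constructor
  · intro h l hl
    have := h l
    rw [hA l hl] at this
    revert this
    cases B i l <;> cases B j l <;> cases A i l <;> decide
  · intro hB l
    by_cases hl : l ∈ S
    · rw [hB l hl, hA l hl]
      cases B i l <;> cases A i l <;> rfl
    · rw [hBA i l (by simp [hl]), hBA j l (by simp [hl])]

theorem rowSums_eq_iff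
    (hBA : ∀ k l, (k, l) ∉ ({i, j} : Finset (Fin m)) ×ˢ S → B k l = A k l)
    (hB : ∀ l ∈ S, B j l = !B i l) (hA : ∀ l ∈ S, A j l = !A i l) :
    (∀ k, #(univ.filter fun l => B k l = true) = #(univ.filter fun l => A k l = true)) ↔
      #(S.filter fun l => B i l = true) = #(S.filter fun l => A i l = true) := by
  have row (k : Fin m) :
      #(univ.filter fun l => B k l = true) = #(univ.filter fun l => A k l = true) ↔
        #(S.filter fun l => B k l = true) = #(S.filter fun l => A k l = true) :=
    card_filter_univ_eq_iff_of_compl fun l hl => by rw [hBA k l (by simp [hl])]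
  refine ⟨fun h => (row i).1 (h i), fun h k => ?_⟩
  by_cases hk : k ∈ ({i, j} : Finset (Fin m))
  · rcases mem_insert.1 hk with rfl | hk
    · exact (row k).2 h
    · rw [mem_singleton.1 hk, row, card_filter_eq_sub_of_eq_not hB, card_filter_eq_sub_of_eq_not hA, h]
  · congr 2
    ext l
    rw [hBA k l (by simp [hk])]

end Sums

section Neighborhood

variable {m n : ℕ} {r : Fin m → ℕ} {c : Fin n → ℕ} {F : Finset (Fin m × Fin n)}
  {A B : BinMat m n} {i j : Fin m} {S : Finset (Fin n)}

theorem inOmega_iff_of_eq_off (hij : i ≠ j) (hA : inOmega r c F A)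
    (hAS : ∀ l ∈ S, A j l = !A i l) (hSF : ∀ l ∈ S, (i, l) ∉ F ∧ (j, l) ∉ F)
    (hBA : ∀ k l, (k, l) ∉ ({i, j} : Finset (Fin m)) ×ˢ S → B k l = A k l) :
    inOmega r c F B ↔
      (∀ l ∈ S, B j l = !B i l) ∧
        #(S.filter fun l => B i l = true) = #(S.filter fun l => A i l = true) := by
  obtain ⟨hr, hc, hF⟩ := hA
  constructor
  · rintro ⟨hrB, hcB, -⟩
    have hB := (colSums_eq_iff hij hBA hAS).1 fun l => (hcB l).trans (hc l).symm
    exact ⟨hB, (rowSums_eq_iff hBA hB hAS).1 fun k => (hrB k).trans (hr k).symm⟩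
  · rintro ⟨hB, hcard⟩
    refine ⟨fun k => ((rowSums_eq_iff hBA hB hAS).2 hcard k).trans (hr k),
      fun l => ((colSums_eq_iff hij hBA hAS).2 hB l).trans (hc l), fun p hp => ?_⟩
    rw [hBA p.1 p.2 fun hmem => ?_, hF p hp]
    obtain ⟨hk, hl⟩ : p.1 ∈ ({i, j} : Finset (Fin m)) ∧ p.2 ∈ S := mem_product.1 hmem
    rcases mem_insert.1 hk with hk | hk
    · exact (hSF p.2 hl).1 (by rw [← hk]; exact hp)
    · exact (hSF p.2 hl).2 (by rw [← mem_singleton.1 hk]; exact hp)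

theorem disjoint_Uset_Lset : Disjoint (Uset F i j A) (Lset F i j A) := by
  rw [disjoint_left]
  intro l hU hL
  simp only [Uset, Lset, mem_filter] at hU hL
  simp_all

theorem eq_not_of_mem_Uset_union_Lset {l : Fin n} (hl : l ∈ Uset F i j A ∪ Lset F i j A) :
    A j l = !A i l := by
  simp only [Uset, Lset, mem_union, mem_filter] at hl
  rcases hl with ⟨-, hi, hj, -⟩ | ⟨-, hi, hj, -⟩ <;> simp [hi, hj]

theorem filter_Uset_union_Lset :
    (Uset F i j A ∪ Lset F i j A).filter (fun l => A i l = true) = Uset F i j A := by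
  ext l
  simp only [Uset, Lset, mem_union, mem_filter]
  constructor
  · rintro ⟨⟨-, hU⟩ | ⟨-, hi, -⟩, hi'⟩
    · exact ⟨mem_univ l, hU⟩
    · simp_all
  · rintro ⟨-, hU⟩
    exact ⟨Or.inl ⟨mem_univ l, hU⟩, hU.1⟩

theorem notMem_of_mem_Uset_union_Lset (hA : ∀ p ∈ F, A p.1 p.2 = false) {l : Fin n}
    (hl : l ∈ Uset F i j A ∪ Lset F i j A) : (i, l) ∉ F ∧ (j, l) ∉ F := by
  simp only [Uset, Lset, mem_union, mem_filter] at hl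
  rcases hl with ⟨-, hi, -, hjF⟩ | ⟨-, -, hj, hiF⟩
  · exact ⟨fun hiF => by simpa [hi] using hA _ hiF, hjF⟩
  · exact ⟨hiF, fun hjF => by simpa [hj] using hA _ hjF⟩

theorem inNbhd_iff (hij : i ≠ j) (hA : inOmega r c F A) :
    inNbhd r c F i j A B ↔
      ∃ T ∈ powersetCard (usize F i j A) (Uset F i j A ∪ Lset F i j A),
        fillRows A i j (Uset F i j A ∪ Lset F i j A) T = B := by
  set S := Uset F i j A ∪ Lset F i j A
  have hΩ (B : BinMat m n) := inOmega_iff_of_eq_off (B := B) hij hA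
    (fun _ => eq_not_of_mem_Uset_union_Lset) (fun _ => notMem_of_mem_Uset_union_Lset hA.2.2)
  rw [filter_Uset_union_Lset] at hΩ
  constructor
  · rintro ⟨hB, hBA⟩
    obtain ⟨hBS, hcard⟩ := (hΩ B hBA).1 hB
    exact ⟨_, mem_powersetCard.2 ⟨filter_subset _ _, hcard⟩, (eq_fillRows hij hBA hBS).symm⟩
  · rintro ⟨T, hT, rfl⟩
    obtain ⟨hTS, hTcard⟩ := mem_powersetCard.1 hT
    have hBA : ∀ k l, (k, l) ∉ ({i, j} : Finset (Fin m)) ×ˢ S → fillRows A i j S T k l = A k l :=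
      fun _ _ => fillRows_of_notMem
    refine ⟨(hΩ _ hBA).2 ⟨fun l hl => ?_, ?_⟩, hBA⟩
    · rw [fillRows_left hl, fillRows_right hij hl]
    · rw [filter_fillRows_left hTS, hTcard]
      rfl

end Neighborhood

/-- for every `A ∈ Ω` and rows `i < j`, the `(i,j)`-binomial neighborhood of
`A` has cardinality `C(u_ij(A) + l_ij(A), u_ij(A))`. -/
theorem stmt_5 {m n : ℕ} (r : Fin m → ℕ) (c : Fin n → ℕ) (F : Finset (Fin m × Fin n))
    (i j : Fin m) (hij : i < j) (A : BinMat m n) (hA : inOmega r c F A) :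
    (univ.filter fun B : BinMat m n => inNbhd r c F i j A B).card
      = (usize F i j A + lsize F i j A).choose (usize F i j A) := by
  set S := Uset F i j A ∪ Lset F i j A
  have hN : univ.filter (fun B => inNbhd r c F i j A B) =
      (powersetCard (usize F i j A) S).image (fillRows A i j S) := by
    ext B
    simp only [mem_filter, mem_univ, true_and, mem_image]
    exact inNbhd_iff hij.ne hA
  rw [hN, card_image_of_injOn fun T hT T' hT' => fillRows_injOn (mem_powersetCard.1 hT).1
      (mem_powersetCard.1 hT').1, card_powersetCard, card_union_of_disjoint disjoint_Uset_Lset]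
  rfl
end

section
/- Let A ∈ Ω and 1 ≤ i < j ≤ m with u = u_ij(A) ≥ 1 and l = l_ij(A) ≥ 1. Then the graph whose vertex set is the (i,j)-binomial neighborhood N_ij(A), with distinct B, B' adjacent iff B and B' are switch-adjacent for rows i and j, is isomorphic to the Johnson graph J(u + l, u); an isomorphism is given by mapping B ∈ N_ij(A) to the u-element subset U_ij(B) of the (u+l)-element set U_ij(A) ∪ L_ij(A). -/
open Finset

attribute [local instance] Classical.propDecidable

/-- `A` and `B` are switch-adjacent for rows `i, j`: `A - B` has exactly four nonzero
entries, all in rows `i` and `j`, and the columns containing them have no forbidden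
entries in rows `i` and `j`. -/
def switchAdjIJ {m n : ℕ} (F : Finset (Fin m × Fin n)) (i j : Fin m)
    (A B : BinMat m n) : Prop :=
  ((univ : Finset (Fin m × Fin n)).filter fun p => A p.1 p.2 ≠ B p.1 p.2).card = 4 ∧
  (∀ p ∈ (univ : Finset (Fin m × Fin n)).filter fun p => A p.1 p.2 ≠ B p.1 p.2,
    p.1 = i ∨ p.1 = j) ∧
  ∀ p ∈ (univ : Finset (Fin m × Fin n)).filter fun p => A p.1 p.2 ≠ B p.1 p.2,
    (i, p.2) ∉ F ∧ (j, p.2) ∉ F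

/-- The pairs of rows `i < j`. -/
def rowPairs (m : ℕ) : Finset (Fin m × Fin m) :=
  univ.filter fun p => p.1 < p.2

/-- The graph on the `(i,j)`-binomial neighborhood of `A`, where distinct `B, B'` are
adjacent iff they are switch-adjacent for rows `i` and `j`. -/
def nbhdGraph {m n : ℕ} (r : Fin m → ℕ) (c : Fin n → ℕ) (F : Finset (Fin m × Fin n))
    (i j : Fin m) (A : BinMat m n) :
    SimpleGraph {B : BinMat m n // inNbhd r c F i j A B} :=
  SimpleGraph.fromRel fun B B' => switchAdjIJ F i j B.val B'.val

/-- The Johnson graph `J(p, q)` realized on the `q`-element subsets of the `p`-element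
ground set `s₀ ⊆ Fin n`; two such subsets are adjacent iff their intersection has `q - 1`
elements. -/
def johnsonGraphOn {n : ℕ} (s₀ : Finset (Fin n)) (q : ℕ) :
    SimpleGraph {s : Finset (Fin n) // s ⊆ s₀ ∧ s.card = q} :=
  SimpleGraph.fromRel fun s t => (s.val ∩ t.val).card = q - 1

namespace Stmt6Aux
open Finset

variable {m n : ℕ} {r : Fin m → ℕ} {c : Fin n → ℕ} {F : Finset (Fin m × Fin n)}
  {i j : Fin m} {A : BinMat m n}

lemma card_filter_split {α : Type*} [Fintype α] [DecidableEq α] (p : α → Prop)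
    [DecidablePred p] (t : Finset α) :
    (univ.filter p).card = (t.filter p).card + ((univ \ t).filter p).card := by
  rw [← Finset.card_union_of_disjoint (disjoint_filter_filter Finset.disjoint_sdiff),
    ← filter_union, union_sdiff_of_subset (subset_univ t)]

lemma pair_card (hij : i ≠ j) (B : BinMat m n) (k : Fin n) :
    ((({i, j} : Finset (Fin m))).filter fun a => B a k = true).card
      = (B i k).toNat + (B j k).toNat := by
  rw [Finset.card_filter, Finset.sum_pair hij]
  cases B i k <;> cases B j k <;> simp

lemma col_card_eq (hij : i ≠ j) (B B' : BinMat m n) (k : Fin n)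
    (hrest : ∀ a, a ≠ i → a ≠ j → B a k = B' a k)
    (hsum : (B i k).toNat + (B j k).toNat = (B' i k).toNat + (B' j k).toNat) :
    (univ.filter fun a => B a k = true).card
      = (univ.filter fun a => B' a k = true).card := by
  rw [card_filter_split (fun a => B a k = true) ({i, j} : Finset (Fin m)),
    card_filter_split (fun a => B' a k = true) ({i, j} : Finset (Fin m)),
    pair_card hij, pair_card hij, hsum]
  have htail : ((univ \ ({i, j} : Finset (Fin m))).filter fun a => B a k = true)
      = ((univ \ ({i, j} : Finset (Fin m))).filter fun a => B' a k = true) := by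
    apply filter_congr
    intro a ha
    simp only [mem_sdiff, mem_insert, mem_singleton, not_or] at ha
    rw [hrest a ha.2.1 ha.2.2]
  rw [htail]

lemma W_props (hA : inOmega r c F A) {k : Fin n}
    (hk : k ∈ Uset F i j A ∪ Lset F i j A) :
    (i, k) ∉ F ∧ (j, k) ∉ F ∧ A j k = !A i k := by
  rcases Finset.mem_union.1 hk with h | h
  · simp only [Uset, mem_filter, mem_univ, true_and] at h
    obtain ⟨h1, h2, h3⟩ := h
    refine ⟨fun hF => ?_, h3, by simp [h1, h2]⟩
    have := hA.2.2 (i, k) hF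
    simp only at this
    rw [h1] at this
    exact Bool.noConfusion this
  · simp only [Lset, mem_filter, mem_univ, true_and] at h
    obtain ⟨h1, h2, h3⟩ := h
    refine ⟨h3, fun hF => ?_, by simp [h1, h2]⟩
    have := hA.2.2 (j, k) hF
    simp only at this
    rw [h2] at this
    exact Bool.noConfusion this

lemma nbhd_rows {B : BinMat m n} (hB : inNbhd r c F i j A B) :
    ∀ a k, a ≠ i → a ≠ j → B a k = A a k := by
  intro a k ha1 ha2
  exact hB.2 a k (by simp [Finset.mem_product, ha1, ha2])

lemma nbhd_cols {B : BinMat m n} (hB : inNbhd r c F i j A B) :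
    ∀ k, k ∉ Uset F i j A ∪ Lset F i j A → B i k = A i k ∧ B j k = A j k :=
  fun k hk => ⟨hB.2 i k (fun h => hk (Finset.mem_product.1 h).2),
    hB.2 j k (fun h => hk (Finset.mem_product.1 h).2)⟩

lemma nbhd_pair (hij : i ≠ j) (hA : inOmega r c F A) {B : BinMat m n}
    (hB : inNbhd r c F i j A B) {k : Fin n}
    (hk : k ∈ Uset F i j A ∪ Lset F i j A) : B j k = !B i k := by
  have heq : (univ.filter fun a => B a k = true).card
      = (univ.filter fun a => A a k = true).card :=
    (hB.1.2.1 k).trans (hA.2.1 k).symm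
  rw [card_filter_split (fun a => B a k = true) ({i, j} : Finset (Fin m)),
    card_filter_split (fun a => A a k = true) ({i, j} : Finset (Fin m))] at heq
  have htail : ((univ \ ({i, j} : Finset (Fin m))).filter fun a => B a k = true)
      = ((univ \ ({i, j} : Finset (Fin m))).filter fun a => A a k = true) := by
    apply filter_congr
    intro a ha
    simp only [mem_sdiff, mem_insert, mem_singleton, not_or] at ha
    rw [nbhd_rows hB a k ha.2.1 ha.2.2]
  rw [htail, pair_card hij, pair_card hij] at heq
  have hsum : (B i k).toNat + (B j k).toNat = (A i k).toNat + (A j k).toNat := by omega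
  have hAjk := (W_props hA hk).2.2
  rw [hAjk] at hsum
  cases hBi : B i k <;> cases hBj : B j k <;> cases hAi : A i k <;> simp_all

lemma Uset_nbhd (hij : i ≠ j) (hA : inOmega r c F A) {B : BinMat m n}
    (hB : inNbhd r c F i j A B) :
    Uset F i j B = (Uset F i j A ∪ Lset F i j A).filter fun k => B i k = true := by
  ext k
  simp only [Uset, mem_filter, mem_univ, true_and]
  constructor
  · rintro ⟨h1, h2, h3⟩
    by_cases hk : k ∈ Uset F i j A ∪ Lset F i j A
    · exact ⟨hk, h1⟩
    · obtain ⟨hi', hj'⟩ := nbhd_cols hB k hk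
      exact absurd (Finset.mem_union_left _ (by
        simp only [Uset, mem_filter, mem_univ, true_and]
        exact ⟨hi' ▸ h1, hj' ▸ h2, h3⟩)) hk
  · rintro ⟨hk, h1⟩
    refine ⟨h1, ?_, (W_props hA hk).2.1⟩
    rw [nbhd_pair hij hA hB hk, h1]
    rfl

lemma filter_Ai :
    ((Uset F i j A ∪ Lset F i j A).filter fun k => A i k = true) = Uset F i j A := by
  ext k
  simp only [mem_filter, mem_union, Uset, Lset, mem_filter, mem_univ, true_and]
  constructor
  · rintro ⟨h | h, h2⟩
    · exact h
    · rw [h.1] at h2; exact Bool.noConfusion h2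
  · intro h
    exact ⟨Or.inl h, h.1⟩

lemma filter_Aj :
    ((Uset F i j A ∪ Lset F i j A).filter fun k => A j k = true) = Lset F i j A := by
  ext k
  simp only [mem_filter, mem_union, Uset, Lset, mem_filter, mem_univ, true_and]
  constructor
  · rintro ⟨h | h, h2⟩
    · rw [h.2.1] at h2; exact Bool.noConfusion h2
    · exact h
  · intro h
    exact ⟨Or.inr h, h.2.1⟩

lemma Uset_card (hij : i ≠ j) (hA : inOmega r c F A) {B : BinMat m n}
    (hB : inNbhd r c F i j A B) : (Uset F i j B).card = usize F i j A := by
  have hrowB := hB.1.1 i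
  have hrowA := hA.1 i
  rw [card_filter_split (fun k => B i k = true) (Uset F i j A ∪ Lset F i j A)] at hrowB
  rw [card_filter_split (fun k => A i k = true) (Uset F i j A ∪ Lset F i j A)] at hrowA
  have htail : ((univ \ (Uset F i j A ∪ Lset F i j A)).filter fun k => B i k = true)
      = ((univ \ (Uset F i j A ∪ Lset F i j A)).filter fun k => A i k = true) := by
    apply filter_congr
    intro k hk
    rw [(nbhd_cols hB k (mem_sdiff.1 hk).2).1]
  rw [htail] at hrowB
  rw [filter_Ai] at hrowA
  rw [Uset_nbhd hij hA hB]
  unfold usize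
  omega

lemma UL_disjoint : Disjoint (Uset F i j A) (Lset F i j A) := by
  rw [Finset.disjoint_left]
  intro k h1 h2
  simp only [Uset, Lset, mem_filter, mem_univ, true_and] at h1 h2
  rw [h1.1] at h2
  exact Bool.noConfusion h2.1


lemma mem_iff_row (hij : i ≠ j) (hA : inOmega r c F A) {B : BinMat m n}
    (hB : inNbhd r c F i j A B) (k : Fin n) (hk : k ∈ Uset F i j A ∪ Lset F i j A) :
    B i k = true ↔ k ∈ Uset F i j B := by
  rw [Uset_nbhd hij hA hB]
  simp [hk]

lemma Uset_subset (hij : i ≠ j) (hA : inOmega r c F A) {B : BinMat m n}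
    (hB : inNbhd r c F i j A B) : Uset F i j B ⊆ Uset F i j A ∪ Lset F i j A := by
  rw [Uset_nbhd hij hA hB]
  exact filter_subset _ _

/-- The matrix associated to a subset `s` of `U ∪ L`. -/
def matB {m n : ℕ} (F : Finset (Fin m × Fin n)) (i j : Fin m) (A : BinMat m n)
    (s : Finset (Fin n)) : BinMat m n := fun a k =>
  if k ∈ Uset F i j A ∪ Lset F i j A then
    if a = i then decide (k ∈ s) else if a = j then decide (k ∉ s) else A a k
  else A a k

lemma matB_outside {s : Finset (Fin n)} (a : Fin m) (k : Fin n)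
    (h : (a ≠ i ∧ a ≠ j) ∨ k ∉ Uset F i j A ∪ Lset F i j A) :
    matB F i j A s a k = A a k := by
  unfold matB
  rcases h with ⟨h1, h2⟩ | h
  · by_cases hk : k ∈ Uset F i j A ∪ Lset F i j A <;> simp [hk, h1, h2]
  · simp [h]

lemma matB_i_eval {s : Finset (Fin n)} {k : Fin n}
    (hk : k ∈ Uset F i j A ∪ Lset F i j A) :
    matB F i j A s i k = decide (k ∈ s) := by
  simp [matB, hk]

lemma matB_j_eval (hij : i ≠ j) {s : Finset (Fin n)} {k : Fin n}
    (hk : k ∈ Uset F i j A ∪ Lset F i j A) :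
    matB F i j A s j k = decide (k ∉ s) := by
  simp [matB, hk, Ne.symm hij]

lemma matB_filter_i {s : Finset (Fin n)} (hs : s ⊆ Uset F i j A ∪ Lset F i j A) :
    ((Uset F i j A ∪ Lset F i j A).filter fun k => matB F i j A s i k = true) = s := by
  ext k
  simp only [mem_filter]
  constructor
  · rintro ⟨hk, h⟩
    rw [matB_i_eval hk] at h
    exact of_decide_eq_true h
  · intro h
    refine ⟨hs h, ?_⟩
    rw [matB_i_eval (hs h)]
    exact decide_eq_true h

lemma matB_filter_j (hij : i ≠ j) {s : Finset (Fin n)}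
    (hs : s ⊆ Uset F i j A ∪ Lset F i j A) :
    ((Uset F i j A ∪ Lset F i j A).filter fun k => matB F i j A s j k = true)
      = (Uset F i j A ∪ Lset F i j A) \ s := by
  ext k
  simp only [mem_filter, mem_sdiff]
  constructor
  · rintro ⟨hk, h⟩
    rw [matB_j_eval hij hk] at h
    exact ⟨hk, of_decide_eq_true h⟩
  · rintro ⟨hk, h⟩
    refine ⟨hk, ?_⟩
    rw [matB_j_eval hij hk]
    exact decide_eq_true h

lemma matB_mem (hij : i ≠ j) (hA : inOmega r c F A) {s : Finset (Fin n)}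
    (hs : s ⊆ Uset F i j A ∪ Lset F i j A) (hcard : s.card = usize F i j A) :
    inNbhd r c F i j A (matB F i j A s) := by
  have hji : j ≠ i := fun h => hij h.symm
  constructor
  · refine ⟨?_, ?_, ?_⟩
    · -- row sums
      intro a
      by_cases hai : a = i
      · subst a
        rw [card_filter_split (fun k => matB F i j A s i k = true)
          (Uset F i j A ∪ Lset F i j A), matB_filter_i hs]
        have hrA := hA.1 i
        rw [card_filter_split (fun k => A i k = true) (Uset F i j A ∪ Lset F i j A),
          filter_Ai] at hrA
        have htail : ((univ \ (Uset F i j A ∪ Lset F i j A)).filter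
              fun k => matB F i j A s i k = true)
            = ((univ \ (Uset F i j A ∪ Lset F i j A)).filter fun k => A i k = true) := by
          apply filter_congr
          intro k hk
          rw [matB_outside i k (Or.inr (mem_sdiff.1 hk).2)]
        rw [htail]
        unfold usize at hcard
        omega
      · by_cases haj : a = j
        · subst a
          rw [card_filter_split (fun k => matB F i j A s j k = true)
            (Uset F i j A ∪ Lset F i j A), matB_filter_j hij hs]
          have hrA := hA.1 j
          rw [card_filter_split (fun k => A j k = true) (Uset F i j A ∪ Lset F i j A),
            filter_Aj] at hrA
          have htail : ((univ \ (Uset F i j A ∪ Lset F i j A)).filter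
                fun k => matB F i j A s j k = true)
              = ((univ \ (Uset F i j A ∪ Lset F i j A)).filter fun k => A j k = true) := by
            apply filter_congr
            intro k hk
            rw [matB_outside j k (Or.inr (mem_sdiff.1 hk).2)]
          rw [htail]
          have hW : (Uset F i j A ∪ Lset F i j A).card
              = (Uset F i j A).card + (Lset F i j A).card :=
            card_union_of_disjoint UL_disjoint
          have hsd : ((Uset F i j A ∪ Lset F i j A) \ s).card
              = (Uset F i j A ∪ Lset F i j A).card - s.card := card_sdiff_of_subset hs
          have hle : s.card ≤ (Uset F i j A ∪ Lset F i j A).card := card_le_card hs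
          unfold usize at hcard
          omega
        · have heqf : (univ.filter fun k => matB F i j A s a k = true)
              = (univ.filter fun k => A a k = true) := by
            apply filter_congr
            intro k _
            rw [matB_outside a k (Or.inl ⟨hai, haj⟩)]
          rw [heqf]
          exact hA.1 a
    · -- column sums
      intro k
      by_cases hk : k ∈ Uset F i j A ∪ Lset F i j A
      · refine (col_card_eq hij (matB F i j A s) A k ?_ ?_).trans (hA.2.1 k)
        · intro a ha1 ha2
          exact matB_outside a k (Or.inl ⟨ha1, ha2⟩)
        · rw [matB_i_eval hk, matB_j_eval hij hk, (W_props hA hk).2.2]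
          by_cases hks : k ∈ s <;> cases A i k <;> simp [hks]
      · have heqf : (univ.filter fun a => matB F i j A s a k = true)
            = (univ.filter fun a => A a k = true) := by
          apply filter_congr
          intro a _
          rw [matB_outside a k (Or.inr hk)]
        rw [heqf]
        exact hA.2.1 k
    · -- forbidden entries
      rintro ⟨a, k⟩ hp
      by_cases hk : k ∈ Uset F i j A ∪ Lset F i j A
      · by_cases hai : a = i
        · subst a
          exact absurd hp (W_props hA hk).1
        · by_cases haj : a = j
          · subst a
            exact absurd hp (W_props hA hk).2.1
          · show matB F i j A s a k = false
            rw [matB_outside a k (Or.inl ⟨hai, haj⟩)]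
            exact hA.2.2 (a, k) hp
      · show matB F i j A s a k = false
        rw [matB_outside a k (Or.inr hk)]
        exact hA.2.2 (a, k) hp
  · -- agreement outside
    intro a k hak
    by_cases hk : k ∈ Uset F i j A ∪ Lset F i j A
    · have ha : a ∉ ({i, j} : Finset (Fin m)) := fun h => hak (Finset.mem_product.2 ⟨h, hk⟩)
      simp only [mem_insert, mem_singleton, not_or] at ha
      exact matB_outside a k (Or.inl ha)
    · exact matB_outside a k (Or.inr hk)

lemma Uset_matB (hij : i ≠ j) (hA : inOmega r c F A) {s : Finset (Fin n)}
    (hs : s ⊆ Uset F i j A ∪ Lset F i j A) (hcard : s.card = usize F i j A) :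
    Uset F i j (matB F i j A s) = s := by
  rw [Uset_nbhd hij hA (matB_mem hij hA hs hcard), matB_filter_i hs]

lemma row_i_eq (hij : i ≠ j) (hA : inOmega r c F A) {B B' : BinMat m n}
    (hB : inNbhd r c F i j A B) (hB' : inNbhd r c F i j A B')
    (h : Uset F i j B = Uset F i j B') (k : Fin n) : B i k = B' i k := by
  by_cases hk : k ∈ Uset F i j A ∪ Lset F i j A
  · have e1 := mem_iff_row hij hA hB k hk
    have e2 := mem_iff_row hij hA hB' k hk
    rw [h] at e1
    cases hb : B i k <;> cases hb' : B' i k <;> simp_all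
  · rw [(nbhd_cols hB k hk).1, (nbhd_cols hB' k hk).1]

lemma nbhd_inj (hij : i ≠ j) (hA : inOmega r c F A) {B B' : BinMat m n}
    (hB : inNbhd r c F i j A B) (hB' : inNbhd r c F i j A B')
    (h : Uset F i j B = Uset F i j B') : B = B' := by
  funext a k
  by_cases hai : a = i
  · subst a
    exact row_i_eq hij hA hB hB' h k
  · by_cases haj : a = j
    · subst a
      by_cases hk : k ∈ Uset F i j A ∪ Lset F i j A
      · rw [nbhd_pair hij hA hB hk, nbhd_pair hij hA hB' hk,
          row_i_eq hij hA hB hB' h k]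
      · rw [(nbhd_cols hB k hk).2, (nbhd_cols hB' k hk).2]
    · rw [nbhd_rows hB a k hai haj, nbhd_rows hB' a k hai haj]

lemma diff_eq (hij : i ≠ j) (hA : inOmega r c F A) {B B' : BinMat m n}
    (hB : inNbhd r c F i j A B) (hB' : inNbhd r c F i j A B') :
    ((univ : Finset (Fin m × Fin n)).filter fun p => B p.1 p.2 ≠ B' p.1 p.2)
      = ({i, j} : Finset (Fin m)) ×ˢ
          ((Uset F i j B \ Uset F i j B') ∪ (Uset F i j B' \ Uset F i j B)) := by
  ext ⟨a, k⟩
  simp only [mem_filter, mem_univ, true_and, Finset.mem_product, mem_insert,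
    mem_singleton, mem_union, mem_sdiff]
  have hrow : (B i k ≠ B' i k) ↔
      ((k ∈ Uset F i j B ∧ k ∉ Uset F i j B') ∨
        (k ∈ Uset F i j B' ∧ k ∉ Uset F i j B)) := by
    by_cases hk : k ∈ Uset F i j A ∪ Lset F i j A
    · rw [← mem_iff_row hij hA hB k hk, ← mem_iff_row hij hA hB' k hk]
      cases hb : B i k <;> cases hb' : B' i k <;> simp [hb, hb']
    · have h1 : k ∉ Uset F i j B := fun hmem => hk (Uset_subset hij hA hB hmem)
      have h2 : k ∉ Uset F i j B' := fun hmem => hk (Uset_subset hij hA hB' hmem)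
      rw [(nbhd_cols hB k hk).1, (nbhd_cols hB' k hk).1]
      simp [h1, h2]
  have hrowj : (B j k ≠ B' j k) ↔ (B i k ≠ B' i k) := by
    by_cases hk : k ∈ Uset F i j A ∪ Lset F i j A
    · rw [nbhd_pair hij hA hB hk, nbhd_pair hij hA hB' hk]
      cases B i k <;> cases B' i k <;> simp
    · rw [(nbhd_cols hB k hk).2, (nbhd_cols hB' k hk).2,
        (nbhd_cols hB k hk).1, (nbhd_cols hB' k hk).1]
      simp
  constructor
  · intro hne
    have ha : a = i ∨ a = j := by
      by_contra hcon
      push_neg at hcon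
      rw [nbhd_rows hB a k hcon.1 hcon.2, nbhd_rows hB' a k hcon.1 hcon.2] at hne
      exact hne rfl
    refine ⟨ha, ?_⟩
    rcases ha with rfl | rfl
    · exact hrow.1 hne
    · exact hrow.1 (hrowj.1 hne)
  · rintro ⟨ha, hk2⟩
    rcases ha with rfl | rfl
    · exact hrow.2 hk2
    · exact hrowj.2 (hrow.2 hk2)

lemma switch_iff (hij : i ≠ j) (hA : inOmega r c F A) {B B' : BinMat m n}
    (hB : inNbhd r c F i j A B) (hB' : inNbhd r c F i j A B') :
    switchAdjIJ F i j B B' ↔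
      ((Uset F i j B \ Uset F i j B') ∪ (Uset F i j B' \ Uset F i j B)).card = 2 := by
  unfold switchAdjIJ
  rw [diff_eq hij hA hB hB', Finset.card_product, Finset.card_pair hij]
  constructor
  · rintro ⟨h1, -, -⟩
    omega
  · intro h2
    refine ⟨by omega, ?_, ?_⟩
    · intro p hp
      exact (mem_insert.1 (Finset.mem_product.1 hp).1).imp id mem_singleton.1
    · intro p hp
      have hkW : p.2 ∈ Uset F i j A ∪ Lset F i j A := by
        rcases mem_union.1 (Finset.mem_product.1 hp).2 with h | h
        · exact Uset_subset hij hA hB (mem_sdiff.1 h).1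
        · exact Uset_subset hij hA hB' (mem_sdiff.1 h).1
      exact ⟨(W_props hA hkW).1, (W_props hA hkW).2.1⟩

end Stmt6Aux

/-- for `A ∈ Ω` and rows `i < j` with `u = u_ij(A) ≥ 1`, `l = l_ij(A) ≥ 1`,
the graph on the `(i,j)`-binomial neighborhood of `A` given by switch-adjacency for rows
`i, j` is isomorphic to the Johnson graph `J(u + l, u)` on the `(u+l)`-element set
`U_ij(A) ∪ L_ij(A)`, via the map `B ↦ U_ij(B)`. -/
theorem stmt_6 {m n : ℕ} (r : Fin m → ℕ) (c : Fin n → ℕ) (F : Finset (Fin m × Fin n))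
    (i j : Fin m) (hij : i < j) (A : BinMat m n) (hA : inOmega r c F A)
    (hu : 1 ≤ usize F i j A) (hl : 1 ≤ lsize F i j A) :
    ∃ e : nbhdGraph r c F i j A ≃g
        johnsonGraphOn (Uset F i j A ∪ Lset F i j A) (usize F i j A),
      ∀ B : {B : BinMat m n // inNbhd r c F i j A B}, (e B).val = Uset F i j B.val := by
  have hij' : i ≠ j := ne_of_lt hij
  let f : {B : BinMat m n // inNbhd r c F i j A B} →
      {s : Finset (Fin n) // s ⊆ Uset F i j A ∪ Lset F i j A ∧ s.card = usize F i j A} :=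
    fun B => ⟨Uset F i j B.val,
      Stmt6Aux.Uset_subset hij' hA B.prop, Stmt6Aux.Uset_card hij' hA B.prop⟩
  let g : {s : Finset (Fin n) // s ⊆ Uset F i j A ∪ Lset F i j A ∧ s.card = usize F i j A} →
      {B : BinMat m n // inNbhd r c F i j A B} :=
    fun s => ⟨Stmt6Aux.matB F i j A s.val, Stmt6Aux.matB_mem hij' hA s.prop.1 s.prop.2⟩
  have hgf : ∀ B, g (f B) = B := fun B =>
    Subtype.ext (Stmt6Aux.nbhd_inj hij' hA (g (f B)).prop B.prop
      (Stmt6Aux.Uset_matB hij' hA (f B).prop.1 (f B).prop.2))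
  have hfg : ∀ s, f (g s) = s := fun s =>
    Subtype.ext (Stmt6Aux.Uset_matB hij' hA s.prop.1 s.prop.2)
  refine ⟨⟨⟨f, g, hgf, hfg⟩, @fun B B' => ?_⟩, fun B => rfl⟩
  show (johnsonGraphOn _ _).Adj (f B) (f B') ↔ (nbhdGraph r c F i j A).Adj B B'
  rw [johnsonGraphOn, nbhdGraph, SimpleGraph.fromRel_adj, SimpleGraph.fromRel_adj]
  have hS := Stmt6Aux.Uset_card hij' hA B.prop
  have hT := Stmt6Aux.Uset_card hij' hA B'.prop
  have h1 := Finset.card_inter_add_card_sdiff (Uset F i j B.val) (Uset F i j B'.val)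
  have h2 := Finset.card_inter_add_card_sdiff (Uset F i j B'.val) (Uset F i j B.val)
  have hTS : (Uset F i j B'.val ∩ Uset F i j B.val).card
      = (Uset F i j B.val ∩ Uset F i j B'.val).card := by rw [Finset.inter_comm]
  have hsw := Stmt6Aux.switch_iff hij' hA B.prop B'.prop
  have hsw' := Stmt6Aux.switch_iff hij' hA B'.prop B.prop
  have hun : ((Uset F i j B'.val \ Uset F i j B.val) ∪
        (Uset F i j B.val \ Uset F i j B'.val))
      = ((Uset F i j B.val \ Uset F i j B'.val) ∪
        (Uset F i j B'.val \ Uset F i j B.val)) := Finset.union_comm _ _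
  rw [hun] at hsw'
  have hcardU : ((Uset F i j B.val \ Uset F i j B'.val) ∪
        (Uset F i j B'.val \ Uset F i j B.val)).card
      = (Uset F i j B.val \ Uset F i j B'.val).card
        + (Uset F i j B'.val \ Uset F i j B.val).card :=
    Finset.card_union_of_disjoint disjoint_sdiff_sdiff
  rw [hcardU] at hsw hsw'
  have hne1 : (Uset F i j B.val \ Uset F i j B'.val).card
        + (Uset F i j B'.val \ Uset F i j B.val).card = 2
      → Uset F i j B.val ≠ Uset F i j B'.val := by
    intro hnum heq
    rw [heq, Finset.sdiff_self, Finset.card_empty] at hnum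
    omega
  have hinj : Uset F i j B.val ≠ Uset F i j B'.val → B ≠ B' := fun h hc => h (by rw [hc])
  have hval : (f B).val = Uset F i j B.val := rfl
  have hval' : (f B').val = Uset F i j B'.val := rfl
  have hfne : Uset F i j B.val ≠ Uset F i j B'.val → f B ≠ f B' := by
    intro h hc
    exact h (by rw [← hval, ← hval', hc])
  constructor
  · rintro ⟨-, hc | hc⟩
    · rw [hval, hval'] at hc
      have hnum : (Uset F i j B.val \ Uset F i j B'.val).card
          + (Uset F i j B'.val \ Uset F i j B.val).card = 2 := by omega
      exact ⟨hinj (hne1 hnum), Or.inl (hsw.2 hnum)⟩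
    · rw [hval, hval'] at hc
      rw [hTS] at hc
      have hnum : (Uset F i j B.val \ Uset F i j B'.val).card
          + (Uset F i j B'.val \ Uset F i j B.val).card = 2 := by omega
      exact ⟨hinj (hne1 hnum), Or.inl (hsw.2 hnum)⟩
  · rintro ⟨-, hc | hc⟩
    · have hnum := hsw.1 hc
      refine ⟨hfne (hne1 hnum), Or.inl ?_⟩
      rw [hval, hval']
      omega
    · have hnum := hsw'.1 hc
      refine ⟨hfne (hne1 hnum), Or.inl ?_⟩
      rw [hval, hval']
      omega
end

section
/- If A, B ∈ Ω are distinct matrices with B ∈ N_ij(A) and B ∈ N_kl(A) for row pairs i < j and k < l, then {i,j} = {k,l}; that is, two distinct matrices lie in at most one common binomial neighborhood. -/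
open Finset

attribute [local instance] Classical.propDecidable

/-- two distinct matrices of `Ω` lie in at most one common binomial
neighborhood: if `A ≠ B`, `B ∈ N_ij(A)` and `B ∈ N_kl(A)` with `i < j` and `k < l`,
then `(i,j) = (k,l)`. -/
theorem stmt_7 {m n : ℕ} (r : Fin m → ℕ) (c : Fin n → ℕ) (F : Finset (Fin m × Fin n))
    {i j k l : Fin m} (hij : i < j) (hkl : k < l)
    (A B : BinMat m n) (hA : inOmega r c F A) (hAB : A ≠ B)
    (h1 : inNbhd r c F i j A B) (h2 : inNbhd r c F k l A B) :
    i = k ∧ j = l := by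
  classical
  -- find a differing entry
  have hdiff : ∃ a b, A a b ≠ B a b := by
    by_contra h
    push_neg at h
    exact hAB (funext fun a => funext fun b => h a b)
  obtain ⟨a, b, hab⟩ := hdiff
  set S := univ.filter (fun x : Fin m => A x b = true ∧ B x b = false) with hSdef
  set T := univ.filter (fun x : Fin m => A x b = false ∧ B x b = true) with hTdef
  have hcard : S.card = T.card := by
    have hA1 : (univ.filter fun x : Fin m => A x b = true).card = c b := hA.2.1 b
    have hB1 : (univ.filter fun x : Fin m => B x b = true).card = c b := h1.1.2.1 b
    have e1 := Finset.card_filter_add_card_filter_not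
      (s := univ.filter (fun x : Fin m => A x b = true)) (p := fun x => B x b = true)
    have e2 := Finset.card_filter_add_card_filter_not
      (s := univ.filter (fun x : Fin m => B x b = true)) (p := fun x => A x b = true)
    rw [Finset.filter_filter, Finset.filter_filter] at e1 e2
    have hSS : S = univ.filter (fun x : Fin m => A x b = true ∧ ¬ B x b = true) := by
      rw [hSdef]; apply Finset.filter_congr; intro x _; simp
    have hTT : T = univ.filter (fun x : Fin m => B x b = true ∧ ¬ A x b = true) := by
      rw [hTdef]; apply Finset.filter_congr; intro x _
      simp only [Bool.not_eq_true]; tauto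
    have hcomm : (univ.filter (fun x : Fin m => A x b = true ∧ B x b = true)).card
        = (univ.filter (fun x : Fin m => B x b = true ∧ A x b = true)).card := by
      congr 1; apply Finset.filter_congr; intro x _; constructor <;> (intro h; tauto)
    rw [hSS, hTT]
    omega
  have haST : a ∈ S ∨ a ∈ T := by
    rw [hSdef, hTdef]
    simp only [Finset.mem_filter, Finset.mem_univ, true_and]
    rcases Bool.eq_false_or_eq_true (A a b) with h | h <;>
      rcases Bool.eq_false_or_eq_true (B a b) with h' | h' <;>
      simp_all
  have hSne : S.Nonempty := by
    rcases haST with h | h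
    · exact ⟨a, h⟩
    · have : T.Nonempty := ⟨a, h⟩
      rw [← Finset.card_pos] at this ⊢
      omega
  have hTne : T.Nonempty := by
    rw [← Finset.card_pos] at hSne ⊢
    omega
  obtain ⟨a₁, ha₁⟩ := hSne
  obtain ⟨a₂, ha₂⟩ := hTne
  rw [hSdef, Finset.mem_filter] at ha₁
  rw [hTdef, Finset.mem_filter] at ha₂
  have hne12 : a₁ ≠ a₂ := by
    intro h; rw [h] at ha₁; rw [ha₁.2.1] at ha₂; simp at ha₂
  have key : ∀ (p q : Fin m), (∀ x y, (x, y) ∉ (({p, q} : Finset (Fin m)) ×ˢ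
      (Uset F p q A ∪ Lset F p q A)) → B x y = A x y) →
      ∀ x : Fin m, B x b ≠ A x b → x = p ∨ x = q := by
    intro p q hpq x hx
    by_contra hc
    push_neg at hc
    apply hx
    apply hpq
    simp [Finset.mem_product, hc.1, hc.2]
  have hd1 : B a₁ b ≠ A a₁ b := by rw [ha₁.2.1, ha₁.2.2]; simp
  have hd2 : B a₂ b ≠ A a₂ b := by rw [ha₂.2.1, ha₂.2.2]; simp
  have h1a := key i j h1.2 a₁ hd1
  have h1b := key i j h1.2 a₂ hd2
  have h2a := key k l h2.2 a₁ hd1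
  have h2b := key k l h2.2 a₂ hd2
  omega
end

section
/- Let γ > 0 satisfy 1 − u_ij(A) l_ij(A) γ > 0 for all A ∈ Ω and 1 ≤ i < j ≤ m. Then the transition matrix of the γ-switch chain decomposes as P_γ = Σ_{1≤i<j≤m} C(m,2)^{-1} Σ_{N ∈ R_{(i,j)}} [(1 − u_ij l_ij γ)·I_N + γ·M(H_N)], where R_{(i,j)} is the set of equivalence classes of the relation B ∼_{ij} B' iff B' ∈ N_ij(B), I_N is the diagonal 0/1 matrix of the class N, and M(H_N) is the adjacency matrix of the graph on Ω that is the Johnson graph J(u_ij+l_ij, u_ij) on N (under switch-adjacency for rows i,j) with all other matrices isolated. Moreover, the Curveball transition matrix satisfies P_c = Σ_{1≤i<j≤m} C(m,2)^{-1} Σ_{N ∈ R_{(i,j)}} C(u_ij+l_ij, u_ij)^{-1} J_N, where J_N is the all-ones matrix on N×N and zero elsewhere; i.e., the Curveball chain is the heat-bath variant of the γ-switch chain. -/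
open Finset

attribute [local instance] Classical.propDecidable

/-- The state space `Ω(r,c,F)` as a type. -/
abbrev OmegaType {m n : ℕ} (r : Fin m → ℕ) (c : Fin n → ℕ) (F : Finset (Fin m × Fin n)) :=
  {A : BinMat m n // inOmega r c F A}

/-- Transition matrix of the `γ`-switch chain on `Ω(r,c,F)`. -/
noncomputable def Pgamma {m n : ℕ} (r : Fin m → ℕ) (c : Fin n → ℕ)
    (F : Finset (Fin m × Fin n)) (γ : ℝ) :
    Matrix (OmegaType r c F) (OmegaType r c F) ℝ :=
  Matrix.of fun A B =>
    if A = B then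
      (m.choose 2 : ℝ)⁻¹ *
        ∑ p ∈ rowPairs m,
          (1 - (usize F p.1 p.2 A.val : ℝ) * (lsize F p.1 p.2 A.val : ℝ) * γ)
    else if ∃ p ∈ rowPairs m, switchAdjIJ F p.1 p.2 A.val B.val then
      (m.choose 2 : ℝ)⁻¹ * γ
    else 0

/-- Transition matrix of the Curveball chain on `Ω(r,c,F)`.  (For `A ≠ B` at most one
row pair `p` satisfies `B ∈ N_p(A)`, so the sum below has at most one nonzero term.) -/
noncomputable def Pcurve {m n : ℕ} (r : Fin m → ℕ) (c : Fin n → ℕ)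
    (F : Finset (Fin m × Fin n)) :
    Matrix (OmegaType r c F) (OmegaType r c F) ℝ :=
  Matrix.of fun A B =>
    if A = B then
      (m.choose 2 : ℝ)⁻¹ *
        ∑ p ∈ rowPairs m,
          (((usize F p.1 p.2 A.val + lsize F p.1 p.2 A.val).choose
            (usize F p.1 p.2 A.val) : ℝ))⁻¹
    else
      ∑ p ∈ rowPairs m,
        if inNbhd r c F p.1 p.2 A.val B.val then
          (m.choose 2 : ℝ)⁻¹ *
            (((usize F p.1 p.2 A.val + lsize F p.1 p.2 A.val).choose
              (usize F p.1 p.2 A.val) : ℝ))⁻¹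
        else 0

/-- The `(i,j)`-binomial neighborhood of `A`, i.e. the `∼_ij`-equivalence class of `A`,
as a finite subset of `Ω(r,c,F)`. -/
noncomputable def nbhdClass {m n : ℕ} (r : Fin m → ℕ) (c : Fin n → ℕ)
    (F : Finset (Fin m × Fin n)) (i j : Fin m) (A : OmegaType r c F) :
    Finset (OmegaType r c F) :=
  univ.filter fun B => inNbhd r c F i j A.val B.val

/-- The set `R_(i,j)` of equivalence classes of the relation `B ∼_ij B' ↔ B' ∈ N_ij(B)`. -/
noncomputable def nbhdClasses {m n : ℕ} (r : Fin m → ℕ) (c : Fin n → ℕ)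
    (F : Finset (Fin m × Fin n)) (i j : Fin m) :
    Finset (Finset (OmegaType r c F)) :=
  univ.image (nbhdClass r c F i j)

/-- The common value `u_ij` on a class `N` (realized as a `sup`, since `u_ij` is
constant on each binomial neighborhood). -/
noncomputable def uclass {m n : ℕ} {r : Fin m → ℕ} {c : Fin n → ℕ}
    {F : Finset (Fin m × Fin n)} (i j : Fin m) (N : Finset (OmegaType r c F)) : ℕ :=
  N.sup fun A => usize F i j A.val

/-- The common value `l_ij` on a class `N`. -/
noncomputable def lclass {m n : ℕ} {r : Fin m → ℕ} {c : Fin n → ℕ}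
    {F : Finset (Fin m × Fin n)} (i j : Fin m) (N : Finset (OmegaType r c F)) : ℕ :=
  N.sup fun A => lsize F i j A.val

/-- `I_N`: identity on `N`, zero elsewhere. -/
noncomputable def diagOn {X : Type*} (N : Finset X) : Matrix X X ℝ :=
  Matrix.of fun A B => if A = B ∧ A ∈ N then 1 else 0

/-- `J_N`: all ones on `N × N`, zero elsewhere. -/
noncomputable def onesOn {X : Type*} (N : Finset X) : Matrix X X ℝ :=
  Matrix.of fun A B => if A ∈ N ∧ B ∈ N then 1 else 0

/-- `M(H_N)`: the adjacency matrix of the graph on `Ω` that is the Johnson graph on `N`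
(under switch-adjacency for rows `i, j`), all other states being isolated. -/
noncomputable def johnsonAdjOn {m n : ℕ} {r : Fin m → ℕ} {c : Fin n → ℕ}
    {F : Finset (Fin m × Fin n)} (i j : Fin m) (N : Finset (OmegaType r c F)) :
    Matrix (OmegaType r c F) (OmegaType r c F) ℝ :=
  Matrix.of fun A B => if A ∈ N ∧ B ∈ N ∧ switchAdjIJ F i j A.val B.val then 1 else 0

/-!
Fix rows `i < j`. For `B ∈ N_ij(A)` inside `Ω`, the column sums force
`B(i,k) + B(j,k) = A(i,k) + A(j,k)` in every column, so `U_ij ∪ L_ij` (the free columns in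
which rows `i` and `j` differ) is the same for `A` and `B`, and the row sums of rows `i` and `j`
then give `u_ij(B) = u_ij(A)` and `l_ij(B) = l_ij(A)`. Hence `∼_ij` is an equivalence relation
whose classes carry well-defined `u_ij`, `l_ij`, and each entry `(A, B)` of the block sums only
sees the class of `A`. A switch for rows `i, j` stays inside that class and changes both rows
`i` and `j`, so the row pair of a switch is determined by `A` and `B`; comparing entries with
`P_γ` and `P_c` is then bookkeeping.
-/

lemma card_filter_eq_of_forall_notMem_iff {α : Type*} [Fintype α] {p q : α → Prop}
    [DecidablePred p] [DecidablePred q] {T : Finset α} (hpq : ∀ x ∉ T, p x ↔ q x)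
    (h : #(univ.filter p) = #(univ.filter q)) : #(T.filter p) = #(T.filter q) := by
  rw [card_filter, card_filter, ← sum_add_sum_compl T,
    ← sum_add_sum_compl T fun x => if q x then 1 else 0,
    sum_congr rfl fun x hx => if_congr (hpq x (mem_compl.1 hx)) rfl rfl] at h
  rw [card_filter, card_filter]
  exact add_right_cancel h

lemma card_filter_pair_eq_toNat_add {α : Type*} [DecidableEq α] {a b : α} (hab : a ≠ b)
    (f : α → Bool) :
    #(({a, b} : Finset α).filter fun x => f x = true) = (f a).toNat + (f b).toNat := by
  rw [filter_insert, filter_singleton]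
  cases ha : f a <;> cases hb : f b <;> simp [hab]

lemma ne_of_mem_rowPairs {m : ℕ} {p : Fin m × Fin m} (hp : p ∈ rowPairs m) : p.1 ≠ p.2 :=
  (mem_filter.1 hp).2.ne

section SwitchChain

variable {m n : ℕ} {r : Fin m → ℕ} {c : Fin n → ℕ} {F : Finset (Fin m × Fin n)}
  {i j : Fin m} {A B : BinMat m n}

lemma toNat_add_toNat_eq_of_inOmega (hij : i ≠ j) (hA : inOmega r c F A)
    (hB : inOmega r c F B) (k : Fin n) (hrows : ∀ l, l ≠ i → l ≠ j → A l k = B l k) :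
    (A i k).toNat + (A j k).toNat = (B i k).toNat + (B j k).toNat := by
  have h := card_filter_eq_of_forall_notMem_iff (T := {i, j})
    (p := fun l => A l k = true) (q := fun l => B l k = true)
    (fun l hl => by
      simp only [mem_insert, mem_singleton, not_or] at hl
      rw [hrows l hl.1 hl.2])
    (by rw [hA.2.1 k, hB.2.1 k])
  rwa [card_filter_pair_eq_toNat_add hij, card_filter_pair_eq_toNat_add hij] at h

def diffCols (F : Finset (Fin m × Fin n)) (i j : Fin m) (A : BinMat m n) : Finset (Fin n) :=
  univ.filter fun k => A i k ≠ A j k ∧ (i, k) ∉ F ∧ (j, k) ∉ F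

lemma Uset_eq_filter (hA : ∀ p ∈ F, A p.1 p.2 = false) :
    Uset F i j A = (diffCols F i j A).filter fun k => A i k = true := by
  ext k
  simp only [Uset, diffCols, mem_filter, mem_univ, true_and]
  constructor
  · rintro ⟨hi, hj, hjF⟩
    exact ⟨⟨by simp [hi, hj], fun hiF => by simpa [hi] using hA _ hiF, hjF⟩, hi⟩
  · rintro ⟨⟨hne, -, hjF⟩, hi⟩
    exact ⟨hi, by simpa [hi] using hne.symm, hjF⟩

lemma Lset_eq_filter (hA : ∀ p ∈ F, A p.1 p.2 = false) :
    Lset F i j A = (diffCols F i j A).filter fun k => A j k = true := by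
  ext k
  simp only [Lset, diffCols, mem_filter, mem_univ, true_and]
  constructor
  · rintro ⟨hi, hj, hiF⟩
    exact ⟨⟨by simp [hi, hj], hiF, fun hjF => by simpa [hj] using hA _ hjF⟩, hj⟩
  · rintro ⟨⟨hne, hiF, -⟩, hj⟩
    exact ⟨by simpa [hj] using hne, hj, hiF⟩

lemma Uset_union_Lset (hA : ∀ p ∈ F, A p.1 p.2 = false) :
    Uset F i j A ∪ Lset F i j A = diffCols F i j A := by
  rw [Uset_eq_filter hA, Lset_eq_filter hA, ← filter_or]
  refine filter_true_of_mem fun k hk => ?_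
  have hne := (mem_filter.1 hk).2.1
  cases h : A i k <;> simp_all

lemma inNbhd_apply_of_ne {k : Fin m} (hB : inNbhd r c F i j A B) (hki : k ≠ i) (hkj : k ≠ j)
    (l : Fin n) : B k l = A k l :=
  hB.2 k l (by simp [hki, hkj])

lemma inNbhd_apply_of_notMem (hA : inOmega r c F A) (hB : inNbhd r c F i j A B) {l : Fin n}
    (hl : l ∉ diffCols F i j A) (k : Fin m) : B k l = A k l :=
  hB.2 k l (by rw [Uset_union_Lset hA.2.2]; simp [hl])

lemma diffCols_eq_of_inNbhd (hij : i ≠ j) (hA : inOmega r c F A)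
    (hB : inNbhd r c F i j A B) : diffCols F i j B = diffCols F i j A := by
  ext l
  by_cases hl : l ∈ diffCols F i j A
  · have hsum := toNat_add_toNat_eq_of_inOmega hij hA hB.1 l
      fun k hki hkj => (inNbhd_apply_of_ne hB hki hkj l).symm
    simp only [diffCols, mem_filter, mem_univ, true_and] at hl ⊢
    refine iff_of_true ⟨?_, hl.2⟩ hl
    have hne := hl.1
    revert hsum hne
    cases A i l <;> cases A j l <;> cases B i l <;> cases B j l <;> decide
  · simp only [diffCols, mem_filter, mem_univ, true_and, inNbhd_apply_of_notMem hA hB hl]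

lemma usize_eq_of_inNbhd (hij : i ≠ j) (hA : inOmega r c F A) (hB : inNbhd r c F i j A B) :
    usize F i j B = usize F i j A := by
  rw [usize, usize, Uset_eq_filter hB.1.2.2, Uset_eq_filter hA.2.2,
    diffCols_eq_of_inNbhd hij hA hB]
  exact card_filter_eq_of_forall_notMem_iff
    (fun l hl => by rw [inNbhd_apply_of_notMem hA hB hl]) (by rw [hB.1.1 i, hA.1 i])

lemma lsize_eq_of_inNbhd (hij : i ≠ j) (hA : inOmega r c F A) (hB : inNbhd r c F i j A B) :
    lsize F i j B = lsize F i j A := by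
  rw [lsize, lsize, Lset_eq_filter hB.1.2.2, Lset_eq_filter hA.2.2,
    diffCols_eq_of_inNbhd hij hA hB]
  exact card_filter_eq_of_forall_notMem_iff
    (fun l hl => by rw [inNbhd_apply_of_notMem hA hB hl]) (by rw [hB.1.1 j, hA.1 j])

lemma not_switchAdjIJ_self : ¬switchAdjIJ F i j A A := fun h => by simpa using h.1

lemma switchAdjIJ.apply_of_ne (h : switchAdjIJ F i j A B) {k : Fin m} (hki : k ≠ i)
    (hkj : k ≠ j) (l : Fin n) : A k l = B k l := by
  by_contra hne
  rcases h.2.1 (k, l) (by simpa using hne) with rfl | rfl <;> contradiction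

lemma switchAdjIJ.toNat_add_toNat_eq (hij : i ≠ j) (hA : inOmega r c F A)
    (hB : inOmega r c F B) (h : switchAdjIJ F i j A B) (l : Fin n) :
    (A i l).toNat + (A j l).toNat = (B i l).toNat + (B j l).toNat :=
  toNat_add_toNat_eq_of_inOmega hij hA hB l fun _ hki hkj => h.apply_of_ne hki hkj l

lemma switchAdjIJ.ne_and_ne_of_ne (hij : i ≠ j) (hA : inOmega r c F A) (hB : inOmega r c F B)
    (h : switchAdjIJ F i j A B) {k : Fin m} {l : Fin n} (hkl : A k l ≠ B k l) :
    A i l ≠ B i l ∧ A j l ≠ B j l := by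
  have hsum := h.toNat_add_toNat_eq hij hA hB l
  have hk : k = i ∨ k = j := h.2.1 (k, l) (by simpa using hkl)
  rcases hk with hk | hk <;> rw [hk] at hkl <;> revert hsum hkl <;>
    cases A i l <;> cases B i l <;> cases A j l <;> cases B j l <;> decide

lemma switchAdjIJ.filter_rows_eq (hij : i ≠ j) (hA : inOmega r c F A) (hB : inOmega r c F B)
    (h : switchAdjIJ F i j A B) : univ.filter (fun k => ∃ l, A k l ≠ B k l) = {i, j} := by
  obtain ⟨p, hp⟩ :
      (univ.filter fun p : Fin m × Fin n => A p.1 p.2 ≠ B p.1 p.2).Nonempty := by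
    rw [← card_pos, h.1]
    norm_num
  have hcol := h.ne_and_ne_of_ne hij hA hB (mem_filter.1 hp).2
  ext k
  simp only [mem_filter, mem_univ, true_and, mem_insert, mem_singleton]
  constructor
  · rintro ⟨l, hl⟩
    exact h.2.1 (k, l) (by simpa using hl)
  · rintro (rfl | rfl)
    exacts [⟨p.2, hcol.1⟩, ⟨p.2, hcol.2⟩]

lemma switchAdjIJ.eq_of_rowPairs (hA : inOmega r c F A) (hB : inOmega r c F B)
    {p q : Fin m × Fin m} (hp : p ∈ rowPairs m) (hq : q ∈ rowPairs m)
    (h : switchAdjIJ F p.1 p.2 A B) (h' : switchAdjIJ F q.1 q.2 A B) : p = q := by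
  simp only [rowPairs, mem_filter, mem_univ, true_and] at hp hq
  have hrows := (h.filter_rows_eq hp.ne hA hB).symm.trans (h'.filter_rows_eq hq.ne hA hB)
  have h1 : p.1 ∈ ({q.1, q.2} : Finset _) := hrows ▸ mem_insert_self _ _
  have h2 : p.2 ∈ ({q.1, q.2} : Finset _) := hrows ▸ by simp
  have h3 : q.1 ∈ ({p.1, p.2} : Finset _) := hrows ▸ mem_insert_self _ _
  simp only [mem_insert, mem_singleton] at h1 h2 h3
  grind

lemma switchAdjIJ.inNbhd (hij : i ≠ j) (hA : inOmega r c F A) (hB : inOmega r c F B)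
    (h : switchAdjIJ F i j A B) : inNbhd r c F i j A B := by
  refine ⟨hB, fun k l hkl => ?_⟩
  by_contra hne
  have hAB : A k l ≠ B k l := Ne.symm hne
  have hcol := h.ne_and_ne_of_ne hij hA hB hAB
  have hsum := h.toNat_add_toNat_eq hij hA hB l
  have hfree := h.2.2 (k, l) (by simpa using hAB)
  have hAij : A i l ≠ A j l := by
    revert hsum hcol
    cases A i l <;> cases A j l <;> cases B i l <;> cases B j l <;> decide
  apply hkl
  rw [Uset_union_Lset hA.2.2]
  simp only [mem_product, mem_insert, mem_singleton, diffCols, mem_filter, mem_univ, true_and]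
  exact ⟨h.2.1 (k, l) (by simpa using hAB), hAij, hfree⟩

lemma inNbhd_self (hA : inOmega r c F A) : inNbhd r c F i j A A := ⟨hA, fun _ _ _ => rfl⟩

lemma mem_nbhdClass {A B : OmegaType r c F} :
    B ∈ nbhdClass r c F i j A ↔ inNbhd r c F i j A.val B.val := by
  simp [nbhdClass]

lemma mem_nbhdClass_self (A : OmegaType r c F) : A ∈ nbhdClass r c F i j A :=
  mem_nbhdClass.2 (inNbhd_self A.2)

lemma nbhdClass_mem_nbhdClasses (A : OmegaType r c F) :
    nbhdClass r c F i j A ∈ nbhdClasses r c F i j :=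
  mem_image_of_mem _ (mem_univ A)

lemma nbhdClass_eq_of_mem (hij : i ≠ j) {A B : OmegaType r c F}
    (hB : B ∈ nbhdClass r c F i j A) : nbhdClass r c F i j B = nbhdClass r c F i j A := by
  have hB' := mem_nbhdClass.1 hB
  have hS : Uset F i j B.val ∪ Lset F i j B.val = Uset F i j A.val ∪ Lset F i j A.val := by
    rw [Uset_union_Lset B.2.2.2, Uset_union_Lset A.2.2.2, diffCols_eq_of_inNbhd hij A.2 hB']
  ext C
  simp only [mem_nbhdClass, inNbhd, hS]
  exact and_congr_right fun _ => forall₂_congr fun k l =>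
    imp_congr_right fun hkl => by rw [hB'.2 k l hkl]

lemma eq_nbhdClass_of_mem (hij : i ≠ j) {N : Finset (OmegaType r c F)}
    (hN : N ∈ nbhdClasses r c F i j) {A : OmegaType r c F} (hA : A ∈ N) :
    N = nbhdClass r c F i j A := by
  obtain ⟨B, -, rfl⟩ := mem_image.1 hN
  exact (nbhdClass_eq_of_mem hij hA).symm

lemma sum_nbhdClasses_eq_of_notMem {M : Type*} [AddCommMonoid M] (hij : i ≠ j)
    (A : OmegaType r c F) (g : Finset (OmegaType r c F) → M) (hg : ∀ N, A ∉ N → g N = 0) :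
    ∑ N ∈ nbhdClasses r c F i j, g N = g (nbhdClass r c F i j A) :=
  sum_eq_single_of_mem _ (nbhdClass_mem_nbhdClasses A) fun N hN hNA =>
    hg N fun hA => hNA (eq_nbhdClass_of_mem hij hN hA)

lemma sup_nbhdClass_eq {f : BinMat m n → ℕ}
    (hf : ∀ A B, inOmega r c F A → inNbhd r c F i j A B → f B = f A) (A : OmegaType r c F) :
    (nbhdClass r c F i j A).sup (fun B => f B.val) = f A.val :=
  le_antisymm (Finset.sup_le fun _ hB => (hf _ _ A.2 (mem_nbhdClass.1 hB)).le)
    (le_sup (f := fun B : OmegaType r c F => f B.val) (mem_nbhdClass_self A))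

lemma uclass_nbhdClass (hij : i ≠ j) (A : OmegaType r c F) :
    uclass i j (nbhdClass r c F i j A) = usize F i j A.val :=
  sup_nbhdClass_eq (fun _ _ hA hB => usize_eq_of_inNbhd hij hA hB) A

lemma lclass_nbhdClass (hij : i ≠ j) (A : OmegaType r c F) :
    lclass i j (nbhdClass r c F i j A) = lsize F i j A.val :=
  sup_nbhdClass_eq (fun _ _ hA hB => lsize_eq_of_inNbhd hij hA hB) A

lemma sum_switchBlocks_apply (hij : i ≠ j) (γ : ℝ) (A B : OmegaType r c F) :
    (∑ N ∈ nbhdClasses r c F i j,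
      ((1 - (uclass i j N : ℝ) * (lclass i j N : ℝ) * γ) • diagOn N +
        γ • johnsonAdjOn i j N)) A B =
      (if A = B then 1 - (usize F i j A.val : ℝ) * (lsize F i j A.val : ℝ) * γ else 0) +
        if switchAdjIJ F i j A.val B.val then γ else 0 := by
  rw [Matrix.sum_apply, sum_nbhdClasses_eq_of_notMem hij A]
  · by_cases hadj : switchAdjIJ F i j A.val B.val
    · have hB : B ∈ nbhdClass r c F i j A := mem_nbhdClass.2 (hadj.inNbhd hij A.2 B.2)
      have hAB : A ≠ B := by
        rintro rfl
        exact not_switchAdjIJ_self hadj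
      simp [diagOn, johnsonAdjOn, hadj, hB, hAB, mem_nbhdClass_self]
    · simp [diagOn, johnsonAdjOn, hadj, uclass_nbhdClass hij, lclass_nbhdClass hij,
        mem_nbhdClass_self]
  · intro N hA
    simp [diagOn, johnsonAdjOn, hA]

lemma sum_curveballBlocks_apply (hij : i ≠ j) (A B : OmegaType r c F) :
    (∑ N ∈ nbhdClasses r c F i j,
      (((uclass i j N + lclass i j N).choose (uclass i j N) : ℝ))⁻¹ • onesOn N) A B =
      if inNbhd r c F i j A.val B.val then
        (((usize F i j A.val + lsize F i j A.val).choose (usize F i j A.val) : ℝ))⁻¹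
      else 0 := by
  rw [Matrix.sum_apply, sum_nbhdClasses_eq_of_notMem hij A]
  · simp [onesOn, uclass_nbhdClass hij, lclass_nbhdClass hij, mem_nbhdClass, inNbhd_self A.2]
  · intro N hA
    simp [onesOn, hA]

end SwitchChain

theorem stmt_8_general {m n : ℕ} (r : Fin m → ℕ) (c : Fin n → ℕ) (F : Finset (Fin m × Fin n))
    (γ : ℝ) :
    Pgamma r c F γ =
      ∑ p ∈ rowPairs m, (m.choose 2 : ℝ)⁻¹ •
        ∑ N ∈ nbhdClasses r c F p.1 p.2,
          ((1 - (uclass p.1 p.2 N : ℝ) * (lclass p.1 p.2 N : ℝ) * γ) • diagOn N +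
            γ • johnsonAdjOn p.1 p.2 N) ∧
    Pcurve r c F =
      ∑ p ∈ rowPairs m, (m.choose 2 : ℝ)⁻¹ •
        ∑ N ∈ nbhdClasses r c F p.1 p.2,
          (((uclass p.1 p.2 N + lclass p.1 p.2 N).choose (uclass p.1 p.2 N) : ℝ))⁻¹ •
            onesOn N := by
  constructor
  · ext A B
    rw [Matrix.sum_apply, sum_congr rfl fun p hp => by
      rw [Matrix.smul_apply, sum_switchBlocks_apply (ne_of_mem_rowPairs hp), smul_eq_mul]]
    by_cases hAB : A = B
    · subst hAB
      simp only [Pgamma, Matrix.of_apply, if_true, not_switchAdjIJ_self, if_false, add_zero,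
        mul_sum]
    · simp only [Pgamma, Matrix.of_apply, hAB, if_false, zero_add, mul_ite, mul_zero]
      exact (sum_ite_zero _ _ (fun p hp q hq => switchAdjIJ.eq_of_rowPairs A.2 B.2 hp hq) _).symm
  · ext A B
    rw [Matrix.sum_apply, sum_congr rfl fun p hp => by
      rw [Matrix.smul_apply, sum_curveballBlocks_apply (ne_of_mem_rowPairs hp), smul_eq_mul]]
    by_cases hAB : A = B
    · subst hAB
      simp [Pcurve, mul_sum, inNbhd_self A.2]
    · simp [Pcurve, hAB, mul_ite]

/-- if `γ > 0` satisfies `1 - u_ij(A) l_ij(A) γ > 0` on all of `Ω`, then the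
`γ`-switch chain decomposes over row pairs and binomial-neighborhood classes as
`P_γ = Σ_{i<j} C(m,2)⁻¹ Σ_{N ∈ R_(i,j)} [(1 - u l γ) I_N + γ M(H_N)]`, and the Curveball
chain is its heat-bath variant: `P_c = Σ_{i<j} C(m,2)⁻¹ Σ_{N ∈ R_(i,j)} C(u+l,u)⁻¹ J_N`. -/
theorem stmt_8 {m n : ℕ} (r : Fin m → ℕ) (c : Fin n → ℕ) (F : Finset (Fin m × Fin n))
    (γ : ℝ) (hγ : 0 < γ)
    (hass : ∀ A : BinMat m n, inOmega r c F A → ∀ p ∈ rowPairs m,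
      0 < 1 - (usize F p.1 p.2 A : ℝ) * (lsize F p.1 p.2 A : ℝ) * γ) :
    Pgamma r c F γ =
      ∑ p ∈ rowPairs m, (m.choose 2 : ℝ)⁻¹ •
        ∑ N ∈ nbhdClasses r c F p.1 p.2,
          ((1 - (uclass p.1 p.2 N : ℝ) * (lclass p.1 p.2 N : ℝ) * γ) • diagOn N +
            γ • johnsonAdjOn p.1 p.2 N) ∧
    Pcurve r c F =
      ∑ p ∈ rowPairs m, (m.choose 2 : ℝ)⁻¹ •
        ∑ N ∈ nbhdClasses r c F p.1 p.2,
          (((uclass p.1 p.2 N + lclass p.1 p.2 N).choose (uclass p.1 p.2 N) : ℝ))⁻¹ •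
            onesOn N :=
  stmt_8_general r c F γ
end

section
/- Let Ω = Ω(n,d,F) be the set of square n×n binary matrices with all row and column sums equal to d ∈ ℕ, d ≥ 2, nd ≥ 2, with forbidden entries F, and let λ_{|Ω|−1}^{edge} be the smallest eigenvalue of the edge-switch transition matrix P_edge (with ρ = nd). Then λ_{|Ω|−1}^{edge} ≥ −(1/d + 1/(4d²)), and consequently (1 + λ_{|Ω|−1}^{edge})^{-1} ≤ 4d²/(4d² − 4d − 1) ≤ 5/2. -/
open Finset

attribute [local instance] Classical.propDecidable

/-- Transition matrix of the edge-switch chain on `Ω(r,c,F)`, where `ρ` is the total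
number of ones of each matrix in `Ω(r,c,F)`: each pair of distinct switch-adjacent
matrices has transition probability `C(ρ,2)⁻¹`. -/
noncomputable def Pedge {m n : ℕ} (r : Fin m → ℕ) (c : Fin n → ℕ)
    (F : Finset (Fin m × Fin n)) (ρ : ℕ) :
    Matrix (OmegaType r c F) (OmegaType r c F) ℝ :=
  Matrix.of fun A B =>
    if A = B then
      1 - ∑ _B' ∈ univ.filter (fun B' : OmegaType r c F =>
            B' ≠ A ∧ ∃ p ∈ rowPairs m, switchAdjIJ F p.1 p.2 A.val B'.val),
          ((ρ.choose 2 : ℝ))⁻¹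
    else if ∃ p ∈ rowPairs m, switchAdjIJ F p.1 p.2 A.val B.val then
      ((ρ.choose 2 : ℝ))⁻¹
    else 0

/-
Write `P_edge = I - C(ρ,2)⁻¹ L` with `L` the Laplacian of the switch graph, so that an eigenvector
`v` for the eigenvalue `μ` satisfies `μ ‖v‖² = ‖v‖² - C(ρ,2)⁻¹ ⟨v, L v⟩`. Each switch uses a unique
pair of rows, so `L = ∑_{i<j} L_ij`, and `⟨v, L_ij v⟩ ≤ ∑_A (deg_ij A + u_ij A) v_A²` because
`D_{u_ij} + Adj_ij` is positive semidefinite: it is the Gram matrix of the tokens of the matrices,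
a token of `A` being `A` with a one moved from `(i,k)` to `(j,k)` for some `k ∈ U_ij(A)`. Two
distinct matrices share a token iff they are switch-adjacent for rows `i, j`, and then they share
exactly one. With `deg_ij A ≤ u_ij l_ij ≤ d²` and `u_ij ≤ d` this gives
`μ ≥ 1 - C(n,2)(d² + d) / C(nd,2) ≥ -1/d`.
-/

namespace EdgeSwitch

lemma ne_iff_ne_and_ne_of_diff_subset_pair {ι : Type*} [Fintype ι] {f g : ι → Bool}
    (hfg : #{x | f x = true} = #{x | g x = true}) {a b : ι} (hab : a ≠ b)
    (hdiff : ∀ x, f x ≠ g x → x = a ∨ x = b) :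
    (f a ≠ g a ↔ f b ≠ g b) ∧ (f a ≠ g a → f a ≠ f b) := by
  have hsum : ∑ x, ((if f x then 1 else 0 : ℤ) - if g x then 1 else 0) = 0 := by
    simp only [sum_sub_distrib, sum_boole, hfg, sub_self]
  rw [Fintype.sum_eq_add a b hab fun x hx => ?_] at hsum
  · cases ha : f a <;> cases ga : g a <;> cases hb : f b <;> cases gb : g b <;> simp_all
  · by_cases h : f x = g x
    · simp [h]
    · exact absurd (hdiff x h) (by tauto)

lemma sum_sq_sum_filter_mem {α τ : Type*} [Fintype α] [Fintype τ] [DecidableEq τ]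
    (T : α → Finset τ) (v : α → ℝ) :
    ∑ t, (∑ a ∈ univ.filter (t ∈ T ·), v a) ^ 2 = ∑ a, ∑ b, #(T a ∩ T b) * (v a * v b) := by
  simp_rw [sq, sum_filter, sum_mul_sum]
  rw [sum_comm]
  refine sum_congr rfl fun a _ => ?_
  rw [sum_comm]
  refine sum_congr rfl fun b _ => ?_
  simp_rw [ite_zero_mul_ite_zero, ← sum_filter, sum_const, nsmul_eq_mul]
  congr 3
  ext t
  simp

lemma card_rowPairs (m : ℕ) : #(rowPairs m) = m.choose 2 := by
  have h := Fintype.card_product_filter_lt (α := Fin m)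
  rw [Fintype.card_fin] at h
  unfold rowPairs
  convert h

lemma neg_inv_le_one_sub_inv_choose_two_mul {n d : ℕ} (hd : 1 ≤ d) (hnd : 2 ≤ n * d) :
    -(1 / (d : ℝ)) ≤ 1 - ((n * d).choose 2 : ℝ)⁻¹ * (n.choose 2 * (d ^ 2 + d)) := by
  have hdR : (1 : ℝ) ≤ d := by exact_mod_cast hd
  have hndR : (2 : ℝ) ≤ n * d := by exact_mod_cast hnd
  have hC : (0 : ℝ) < (n * d).choose 2 := by exact_mod_cast Nat.choose_pos hnd
  suffices (n.choose 2 : ℝ) * (d ^ 2 + d) ≤ (n * d).choose 2 * (1 + 1 / d) by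
    have := (inv_mul_le_iff₀ hC).mpr this
    linarith
  rw [Nat.cast_choose_two, Nat.cast_choose_two, Nat.cast_mul]
  field_simp
  nlinarith [mul_nonneg (mul_nonneg (by positivity : (0 : ℝ) ≤ n) (by positivity : (0 : ℝ) ≤ d))
    (by nlinarith : (0 : ℝ) ≤ d ^ 2 - 1)]

variable {m n : ℕ}

def diffSet (A B : BinMat m n) : Finset (Fin m × Fin n) :=
  univ.filter fun p => A p.1 p.2 ≠ B p.1 p.2

lemma mem_diffSet {A B : BinMat m n} {p : Fin m × Fin n} :
    p ∈ diffSet A B ↔ A p.1 p.2 ≠ B p.1 p.2 := by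
  simp [diffSet]

def switch (A : BinMat m n) (i j : Fin m) (k₁ k₂ : Fin n) : BinMat m n :=
  fun r s => if (r = i ∨ r = j) ∧ (s = k₁ ∨ s = k₂) then !A r s else A r s

lemma diffSet_switch (A : BinMat m n) (i j : Fin m) (k₁ k₂ : Fin n) :
    diffSet A (switch A i j k₁ k₂) = ({i, j} : Finset (Fin m)) ×ˢ ({k₁, k₂} : Finset (Fin n)) := by
  ext ⟨r, s⟩
  by_cases h : (r = i ∨ r = j) ∧ (s = k₁ ∨ s = k₂) <;> simp [mem_diffSet, switch, h]

lemma eq_switch_of_diffSet_eq {A B : BinMat m n} {i j : Fin m} {k₁ k₂ : Fin n}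
    (h : diffSet A B = ({i, j} : Finset (Fin m)) ×ˢ ({k₁, k₂} : Finset (Fin n))) :
    B = switch A i j k₁ k₂ := by
  funext r s
  have hrs := congrArg ((r, s) ∈ ·) h
  simp only [mem_diffSet, mem_product, mem_insert, mem_singleton, eq_iff_iff] at hrs
  unfold switch
  split_ifs with hc
  · cases hA : A r s <;> cases hB : B r s <;> simp_all
  · cases hA : A r s <;> cases hB : B r s <;> simp_all

variable {r : Fin m → ℕ} {c : Fin n → ℕ} {F : Finset (Fin m × Fin n)}

lemma switchAdjIJ_switch {A : BinMat m n} (hA : inOmega r c F A) {i j : Fin m} (hij : i ≠ j)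
    {k₁ k₂ : Fin n} (hk₁ : k₁ ∈ Uset F i j A) (hk₂ : k₂ ∈ Lset F i j A) :
    switchAdjIJ F i j A (switch A i j k₁ k₂) := by
  simp only [Uset, Lset, mem_filter, mem_univ, true_and] at hk₁ hk₂
  have hk : k₁ ≠ k₂ := fun h => by simp [h, hk₂.1] at hk₁
  have hFik₁ : (i, k₁) ∉ F := fun h => by simp [hA.2.2 _ h] at hk₁
  have hFjk₂ : (j, k₂) ∉ F := fun h => by simp [hA.2.2 _ h] at hk₂
  have hD := diffSet_switch A i j k₁ k₂
  refine ⟨?_, fun p hp => ?_, fun p hp => ?_⟩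
  · change #(diffSet _ _) = 4
    rw [hD, card_product, card_pair hij, card_pair hk]
  · change p ∈ diffSet _ _ at hp
    rw [hD, mem_product] at hp
    simpa using hp.1
  · change p ∈ diffSet _ _ at hp
    rw [hD, mem_product] at hp
    obtain h | h : p.2 = k₁ ∨ p.2 = k₂ := by simpa using hp.2
    all_goals rw [h]
    exacts [⟨hFik₁, hk₁.2.2⟩, ⟨hk₂.2.2, hFjk₂⟩]

lemma diffSet_eq_product_of_rows {A B : BinMat m n} (hA : inOmega r c F A)
    (hB : inOmega r c F B) {i j : Fin m} (hij : i ≠ j)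
    (hrows : ∀ p ∈ diffSet A B, p.1 = i ∨ p.1 = j) :
    diffSet A B = ({i, j} : Finset (Fin m)) ×ˢ univ.filter (fun s => A i s ≠ B i s) ∧
      ∀ s, A i s ≠ B i s → A i s ≠ A j s := by
  -- equal column sums: a column of `A - B` is either zero or nonzero exactly in rows `i, j`
  have hcol (s : Fin n) : (A i s ≠ B i s ↔ A j s ≠ B j s) ∧ (A i s ≠ B i s → A i s ≠ A j s) :=
    ne_iff_ne_and_ne_of_diff_subset_pair (f := fun r => A r s) (g := fun r => B r s)
      ((hA.2.1 s).trans (hB.2.1 s).symm) hij fun r hr => hrows (r, s) (mem_diffSet.mpr hr)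
  refine ⟨?_, fun s => (hcol s).2⟩
  ext ⟨r, s⟩
  simp only [mem_diffSet, mem_product, mem_insert, mem_singleton, mem_filter, mem_univ, true_and]
  constructor
  · intro hrs
    rcases hrows (r, s) (mem_diffSet.mpr hrs) with rfl | rfl
    exacts [⟨Or.inl rfl, hrs⟩, ⟨Or.inr rfl, (hcol s).1.mpr hrs⟩]
  · rintro ⟨rfl | rfl, hs⟩
    exacts [hs, (hcol s).1.mp hs]

lemma exists_eq_switch_of_switchAdjIJ {A B : BinMat m n} (hA : inOmega r c F A)
    (hB : inOmega r c F B) {i j : Fin m} (hij : i ≠ j) (h : switchAdjIJ F i j A B) :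
    ∃ k₁ ∈ Uset F i j A, ∃ k₂ ∈ Lset F i j A, B = switch A i j k₁ k₂ := by
  obtain ⟨hcard, hrows, hfree⟩ := h
  change #(diffSet A B) = 4 at hcard
  change ∀ p ∈ diffSet A B, _ at hrows hfree
  obtain ⟨hD, hcol⟩ := diffSet_eq_product_of_rows hA hB hij hrows
  set K : Finset (Fin n) := univ.filter fun s => A i s ≠ B i s with hKdef
  have hK : #K = 2 := by
    have : #({i, j} : Finset (Fin m)) * #K = 4 := by rw [← card_product, ← hD, hcard]
    rw [card_pair hij] at this
    omega
  -- equal row sums: of the two columns of `K`, row `i` of `A` has a one in exactly one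
  obtain ⟨k₁, k₂, hK₁₂, hik₁, hik₂⟩ :
      ∃ k₁ k₂, K = {k₁, k₂} ∧ A i k₁ = true ∧ A i k₂ = false := by
    obtain ⟨a, b, hab, hKab⟩ := card_eq_two.mp hK
    have hmem (s : Fin n) : A i s ≠ B i s ↔ s = a ∨ s = b := by
      have hs : s ∈ K ↔ s ∈ ({a, b} : Finset (Fin n)) := by rw [hKab]
      simpa [hKdef] using hs
    have hrow := (ne_iff_ne_and_ne_of_diff_subset_pair ((hA.1 i).trans (hB.1 i).symm) hab
      fun s hs => (hmem s).mp hs).2 ((hmem a).mpr (Or.inl rfl))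
    cases ha : A i a
    · exact ⟨b, a, hKab.trans (pair_comm a b), by simpa [ha] using hrow, ha⟩
    · exact ⟨a, b, hKab, ha, by simpa [ha] using hrow⟩
  rw [hK₁₂] at hD
  have hmemD {r : Fin m} {s : Fin n} (hr : r = i ∨ r = j) (hs : s = k₁ ∨ s = k₂) :
      (r, s) ∈ diffSet A B := by
    rw [hD]; simp [hr, hs]
  have hjk₁ : A j k₁ = false := by
    simpa [hik₁] using (hcol k₁ (mem_diffSet.mp (hmemD (Or.inl rfl) (Or.inl rfl)))).symm
  have hjk₂ : A j k₂ = true := by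
    simpa [hik₂] using (hcol k₂ (mem_diffSet.mp (hmemD (Or.inl rfl) (Or.inr rfl)))).symm
  refine ⟨k₁, ?_, k₂, ?_, eq_switch_of_diffSet_eq hD⟩
  · simpa [Uset, hik₁, hjk₁] using (hfree _ (hmemD (Or.inl rfl) (Or.inl rfl))).2
  · simpa [Lset, hik₂, hjk₂] using (hfree _ (hmemD (Or.inl rfl) (Or.inr rfl))).1

lemma eq_of_switchAdjIJ_of_switchAdjIJ {A B : BinMat m n} (hA : inOmega r c F A)
    (hB : inOmega r c F B) {i j i' j' : Fin m} (hij : i < j) (hij' : i' < j')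
    (h : switchAdjIJ F i j A B) (h' : switchAdjIJ F i' j' A B) : (i, j) = (i', j') := by
  obtain ⟨k₁, -, k₂, -, rfl⟩ := exists_eq_switch_of_switchAdjIJ hA hB hij.ne h
  have hrow {r : Fin m} (hr : r = i ∨ r = j) : r = i' ∨ r = j' :=
    h'.2.1 (r, k₁) (by change _ ∈ diffSet _ _; simp [diffSet_switch, hr])
  have hi := hrow (Or.inl rfl)
  have hj := hrow (Or.inr rfl)
  simp only [Prod.mk.injEq, Fin.ext_iff, Fin.lt_def] at hi hj hij hij' ⊢
  omega

lemma usize_le {A : BinMat m n} (hA : inOmega r c F A) (i j : Fin m) : usize F i j A ≤ r i :=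
  (hA.1 i) ▸ card_le_card fun k hk => by simp_all [Uset]

lemma lsize_le {A : BinMat m n} (hA : inOmega r c F A) (i j : Fin m) : lsize F i j A ≤ r j :=
  (hA.1 j) ▸ card_le_card fun k hk => by simp_all [Lset]

noncomputable def switchNbrs (i j : Fin m) (A : OmegaType r c F) : Finset (OmegaType r c F) :=
  {B | B ≠ A ∧ switchAdjIJ F i j A.val B.val}

lemma card_switchNbrs_le {i j : Fin m} (hij : i ≠ j) (A : OmegaType r c F) :
    #(switchNbrs i j A) ≤ usize F i j A.val * lsize F i j A.val := by
  calc #(switchNbrs i j A) = #((switchNbrs i j A).map (Function.Embedding.subtype _)) :=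
        (card_map _).symm
    _ ≤ #((Uset F i j A.val ×ˢ Lset F i j A.val).image fun k => switch A.val i j k.1 k.2) := by
        refine card_le_card fun B' hB' => ?_
        obtain ⟨B, hB, rfl⟩ := mem_map.mp hB'
        have hadj : switchAdjIJ F i j A.val B.val := (mem_filter.mp hB).2.2
        obtain ⟨k₁, hk₁, k₂, hk₂, hB⟩ := exists_eq_switch_of_switchAdjIJ A.2 B.2 hij hadj
        exact mem_image.mpr ⟨(k₁, k₂), mem_product.mpr ⟨hk₁, hk₂⟩, hB.symm⟩
    _ ≤ #(Uset F i j A.val ×ˢ Lset F i j A.val) := card_image_le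
    _ = usize F i j A.val * lsize F i j A.val := card_product _ _

noncomputable def edgeNbrs (A : OmegaType r c F) : Finset (OmegaType r c F) :=
  {B | B ≠ A ∧ ∃ p ∈ rowPairs m, switchAdjIJ F p.1 p.2 A.val B.val}

lemma edgeNbrs_eq_biUnion (A : OmegaType r c F) :
    edgeNbrs A = (rowPairs m).biUnion fun p => switchNbrs p.1 p.2 A := by
  ext B
  simp only [edgeNbrs, switchNbrs, mem_filter, mem_univ, true_and, mem_biUnion]
  tauto

lemma pairwiseDisjoint_switchNbrs (A : OmegaType r c F) :
    (rowPairs m : Set (Fin m × Fin m)).PairwiseDisjoint fun p => switchNbrs p.1 p.2 A := by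
  intro p hp q hq hpq
  refine disjoint_left.mpr fun B hBp hBq => hpq ?_
  simp only [rowPairs, coe_filter, mem_univ, true_and, Set.mem_ofPred_eq] at hp hq
  simp only [switchNbrs, mem_filter, mem_univ, true_and] at hBp hBq
  exact eq_of_switchAdjIJ_of_switchAdjIJ A.2 B.2 hp hq hBp.2 hBq.2

def token (A : BinMat m n) (i j : Fin m) (k : Fin n) : BinMat m n :=
  fun r s => if s = k ∧ r = i then false else if s = k ∧ r = j then true else A r s

def tokens (F : Finset (Fin m × Fin n)) (i j : Fin m) (A : BinMat m n) : Finset (BinMat m n) :=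
  (Uset F i j A).image (token A i j)

lemma card_tokens (F : Finset (Fin m × Fin n)) (i j : Fin m) (A : BinMat m n) :
    #(tokens F i j A) = usize F i j A := by
  refine card_image_of_injOn fun k hk k' _ h => ?_
  by_contra hne
  have := congrFun (congrFun h i) k
  simp_all [token, Uset]

lemma token_eq_token_switch {A : BinMat m n} {i j : Fin m} (hij : i ≠ j) {k₁ k₂ : Fin n}
    (hk₁ : k₁ ∈ Uset F i j A) (hk₂ : k₂ ∈ Lset F i j A) :
    token A i j k₁ = token (switch A i j k₁ k₂) i j k₂ := by
  simp only [Uset, Lset, mem_filter, mem_univ, true_and] at hk₁ hk₂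
  funext r s
  by_cases hs₁ : s = k₁ <;> by_cases hs₂ : s = k₂ <;> by_cases hri : r = i <;>
    by_cases hrj : r = j <;> simp_all [token, switch]

lemma mem_Uset_switch {A : BinMat m n} (hA : inOmega r c F A) {i j : Fin m} (k₁ : Fin n)
    {k₂ : Fin n} (hk₂ : k₂ ∈ Lset F i j A) : k₂ ∈ Uset F i j (switch A i j k₁ k₂) := by
  simp only [Uset, Lset, mem_filter, mem_univ, true_and] at hk₂ ⊢
  refine ⟨by simp [switch, hk₂.1], by simp [switch, hk₂.2.1], fun hF => ?_⟩
  simp [hA.2.2 _ hF] at hk₂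

lemma eq_switch_of_token_eq {A B : BinMat m n} (hB : inOmega r c F B) {i j : Fin m}
    (hij : i ≠ j) (hAB : A ≠ B) {k₁ k₂ : Fin n} (hk₁ : k₁ ∈ Uset F i j A)
    (hk₂ : k₂ ∈ Uset F i j B) (h : token A i j k₁ = token B i j k₂) :
    k₂ ∈ Lset F i j A ∧ B = switch A i j k₁ k₂ := by
  simp only [Uset, mem_filter, mem_univ, true_and] at hk₁ hk₂
  have hrs (r : Fin m) (s : Fin n) := congrFun (congrFun h r) s
  have hk : k₁ ≠ k₂ := by
    rintro rfl
    refine hAB (funext fun r => funext fun s => ?_)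
    have := hrs r s
    by_cases hs : s = k₁ <;> by_cases hri : r = i <;> by_cases hrj : r = j <;> simp_all [token]
  have hik₂ : A i k₂ = false := by simpa [token, hk.symm] using hrs i k₂
  have hjk₂ : A j k₂ = true := by simpa [token, hk.symm, hij.symm] using hrs j k₂
  refine ⟨?_, funext fun r => funext fun s => ?_⟩
  · simp only [Lset, mem_filter, mem_univ, true_and]
    exact ⟨hik₂, hjk₂, fun hF => by simp [hB.2.2 _ hF] at hk₂⟩
  · have := hrs r s
    by_cases hs₁ : s = k₁ <;> by_cases hs₂ : s = k₂ <;> by_cases hri : r = i <;>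
      by_cases hrj : r = j <;> simp_all [token, switch]

lemma card_tokens_inter_of_mem_switchNbrs {i j : Fin m} (hij : i ≠ j) {A B : OmegaType r c F}
    (hB : B ∈ switchNbrs i j A) : #(tokens F i j A.val ∩ tokens F i j B.val) = 1 := by
  obtain ⟨hBA, hadj⟩ := (mem_filter.mp hB).2
  have hAB : A.val ≠ B.val := fun h => hBA (Subtype.ext h.symm)
  obtain ⟨k₁, hk₁, k₂, hk₂, hBeq⟩ := exists_eq_switch_of_switchAdjIJ A.2 B.2 hij hadj
  refine card_eq_one.mpr ⟨token A.val i j k₁, eq_singleton_iff_unique_mem.mpr ⟨?_, ?_⟩⟩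
  · refine mem_inter.mpr ⟨mem_image_of_mem _ hk₁, mem_image.mpr ⟨k₂, ?_, ?_⟩⟩
    · rw [hBeq]; exact mem_Uset_switch A.2 k₁ hk₂
    · rw [hBeq]; exact (token_eq_token_switch hij hk₁ hk₂).symm
  · intro t ht
    obtain ⟨⟨k₁', hk₁', rfl⟩, ⟨k₂', hk₂', ht⟩⟩ := And.imp mem_image.mp mem_image.mp (mem_inter.mp ht)
    obtain ⟨-, hB'⟩ := eq_switch_of_token_eq B.2 hij hAB hk₁' hk₂' ht.symm
    have hmem : (i, k₁') ∈ diffSet A.val B.val := by rw [hB', diffSet_switch]; simp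
    rw [hBeq, diffSet_switch] at hmem
    simp only [Uset, Lset, mem_filter, mem_univ, true_and] at hk₁' hk₂
    obtain rfl | rfl : k₁' = k₁ ∨ k₁' = k₂ := by simpa using hmem
    · rfl
    · simp [hk₂.1] at hk₁'

lemma disjoint_tokens_of_notMem_switchNbrs {i j : Fin m} (hij : i ≠ j) {A B : OmegaType r c F}
    (hBA : B ≠ A) (hB : B ∉ switchNbrs i j A) :
    Disjoint (tokens F i j A.val) (tokens F i j B.val) := by
  refine disjoint_left.mpr fun t htA htB => ?_
  obtain ⟨k₁, hk₁, rfl⟩ := mem_image.mp htA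
  obtain ⟨k₂, hk₂, ht⟩ := mem_image.mp htB
  obtain ⟨hk₂L, hBeq⟩ :=
    eq_switch_of_token_eq B.2 hij (fun h => hBA (Subtype.ext h.symm)) hk₁ hk₂ ht.symm
  exact hB (mem_filter.mpr ⟨mem_univ _, hBA, hBeq ▸ switchAdjIJ_switch A.2 hij hk₁ hk₂L⟩)

lemma sum_usize_mul_sq_add_sum_switchNbrs_nonneg {i j : Fin m} (hij : i ≠ j)
    (v : OmegaType r c F → ℝ) :
    0 ≤ ∑ A, usize F i j A.val * v A ^ 2 + ∑ A, ∑ B ∈ switchNbrs i j A, v A * v B := by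
  have hcard (A B : OmegaType r c F) : (#(tokens F i j A.val ∩ tokens F i j B.val) : ℝ) =
      (if B = A then (usize F i j A.val : ℝ) else 0) + if B ∈ switchNbrs i j A then 1 else 0 := by
    by_cases hBA : B = A
    · have hA : A ∉ switchNbrs i j A := fun h => (mem_filter.mp h).2.1 rfl
      simp [hBA, hA, card_tokens]
    by_cases hB : B ∈ switchNbrs i j A
    · simp [hBA, hB, card_tokens_inter_of_mem_switchNbrs hij hB]
    · simp [hBA, hB, disjoint_iff_inter_eq_empty.mp
        (disjoint_tokens_of_notMem_switchNbrs hij hBA hB)]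
  calc (0 : ℝ) ≤ ∑ t, (∑ A ∈ univ.filter (t ∈ tokens F i j ·.val), v A) ^ 2 :=
        sum_nonneg fun t _ => sq_nonneg _
    _ = _ := by
        rw [sum_sq_sum_filter_mem, ← sum_add_distrib]
        refine sum_congr rfl fun A _ => ?_
        simp_rw [hcard, add_mul, sum_add_distrib, ite_mul, zero_mul, one_mul, sum_ite_eq',
          mem_univ, if_true, ← sum_filter, filter_mem_eq_inter, univ_inter]
        ring

lemma Pedge_mulVec_apply (ρ : ℕ) (v : OmegaType r c F → ℝ) (A : OmegaType r c F) :
    (Pedge r c F ρ).mulVec v A = v A - (ρ.choose 2 : ℝ)⁻¹ * ∑ B ∈ edgeNbrs A, (v A - v B) := by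
  have hP (B : OmegaType r c F) : Pedge r c F ρ A B * v B =
      (if B = A then (1 - #(edgeNbrs A) * (ρ.choose 2 : ℝ)⁻¹) * v A else 0) +
        if B ∈ edgeNbrs A then (ρ.choose 2 : ℝ)⁻¹ * v B else 0 := by
    by_cases hBA : B = A
    · subst hBA
      simp [Pedge, edgeNbrs]
    · simp [Pedge, Ne.symm hBA, hBA, edgeNbrs]
  rw [Matrix.mulVec, dotProduct]
  simp_rw [hP, sum_add_distrib, sum_ite_eq', mem_univ, if_true,
    ← sum_filter, filter_mem_eq_inter, univ_inter, ← mul_sum, sum_sub_distrib, sum_const,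
    nsmul_eq_mul]
  ring

section RowRegular

variable {d : ℕ}

lemma sum_switchNbrs_mul_sub_le {i j : Fin m} (hij : i ≠ j)
    (v : OmegaType (fun _ : Fin m => d) c F → ℝ) :
    ∑ A, ∑ B ∈ switchNbrs i j A, v A * (v A - v B) ≤ (d ^ 2 + d) * ∑ A, v A ^ 2 := by
  have hdeg (A : OmegaType (fun _ : Fin m => d) c F) :
      (#(switchNbrs i j A) : ℝ) + usize F i j A.val ≤ d ^ 2 + d := by
    have := (card_switchNbrs_le hij A).trans
      (Nat.mul_le_mul (usize_le A.2 i j) (lsize_le A.2 i j))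
    have := usize_le A.2 i j
    exact_mod_cast (by nlinarith : #(switchNbrs i j A) + usize F i j A.val ≤ d ^ 2 + d)
  have hgram := sum_usize_mul_sq_add_sum_switchNbrs_nonneg hij v
  calc ∑ A, ∑ B ∈ switchNbrs i j A, v A * (v A - v B)
      = ∑ A, #(switchNbrs i j A) * v A ^ 2 - ∑ A, ∑ B ∈ switchNbrs i j A, v A * v B := by
        simp_rw [← sum_sub_distrib, mul_sub, sum_sub_distrib, sum_const, nsmul_eq_mul, sq]
    _ ≤ ∑ A, (#(switchNbrs i j A) + usize F i j A.val) * v A ^ 2 := by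
        simp_rw [add_mul, sum_add_distrib]
        linarith
    _ ≤ ∑ A, (d ^ 2 + d) * v A ^ 2 :=
        sum_le_sum fun A _ => mul_le_mul_of_nonneg_right (hdeg A) (sq_nonneg _)
    _ = (d ^ 2 + d) * ∑ A, v A ^ 2 := (mul_sum _ _ _).symm

lemma sum_edgeNbrs_mul_sub_le (v : OmegaType (fun _ : Fin m => d) c F → ℝ) :
    ∑ A, ∑ B ∈ edgeNbrs A, v A * (v A - v B) ≤ m.choose 2 * (d ^ 2 + d) * ∑ A, v A ^ 2 := by
  calc ∑ A, ∑ B ∈ edgeNbrs A, v A * (v A - v B)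
      = ∑ p ∈ rowPairs m, ∑ A, ∑ B ∈ switchNbrs p.1 p.2 A, v A * (v A - v B) := by
        simp_rw [edgeNbrs_eq_biUnion, sum_biUnion (pairwiseDisjoint_switchNbrs _)]
        exact sum_comm
    _ ≤ ∑ p ∈ rowPairs m, (d ^ 2 + d) * ∑ A, v A ^ 2 :=
        sum_le_sum fun p hp => sum_switchNbrs_mul_sub_le (mem_filter.mp hp).2.ne v
    _ = m.choose 2 * (d ^ 2 + d) * ∑ A, v A ^ 2 := by
        rw [sum_const, nsmul_eq_mul, card_rowPairs, mul_assoc]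

lemma le_of_isRoot_charpoly_Pedge {ρ : ℕ} {μ : ℝ}
    (hμ : (Pedge (fun _ : Fin m => d) c F ρ).charpoly.IsRoot μ) :
    1 - (ρ.choose 2 : ℝ)⁻¹ * (m.choose 2 * (d ^ 2 + d)) ≤ μ := by
  set C : ℝ := (ρ.choose 2 : ℝ)⁻¹
  have hspec : μ ∈ spectrum ℝ (Matrix.toLin' (Pedge (fun _ : Fin m => d) c F ρ)) := by
    rw [Matrix.spectrum_toLin']
    exact Matrix.mem_spectrum_of_isRoot_charpoly hμ
  obtain ⟨v, hv⟩ := (Module.End.hasEigenvalue_iff_mem_spectrum.mpr hspec).exists_hasEigenvector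
  have hPv : (Pedge (fun _ : Fin m => d) c F ρ).mulVec v = μ • v := by
    simpa using hv.apply_eq_smul
  set S := ∑ A, v A ^ 2
  have hS : 0 < S := by
    obtain ⟨A, hA : v A ≠ 0⟩ := Function.ne_iff.mp hv.2
    exact (by positivity : 0 < v A ^ 2).trans_le
      (single_le_sum (fun B _ => sq_nonneg (v B)) (mem_univ A))
  have hRayleigh : μ * S = S - C * ∑ A, ∑ B ∈ edgeNbrs A, v A * (v A - v B) := by
    calc μ * S = ∑ A, v A * (Pedge (fun _ : Fin m => d) c F ρ).mulVec v A := by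
          simp only [hPv, Pi.smul_apply, smul_eq_mul, S, mul_sum]
          exact sum_congr rfl fun A _ => by ring
      _ = S - C * ∑ A, ∑ B ∈ edgeNbrs A, v A * (v A - v B) := by
          rw [mul_sum, ← sum_sub_distrib]
          refine sum_congr rfl fun A _ => ?_
          rw [Pedge_mulVec_apply, ← mul_sum]
          ring
  have hC : 0 ≤ C := by positivity
  have := mul_le_mul_of_nonneg_left (sum_edgeNbrs_mul_sub_le v) hC
  refine le_of_mul_le_mul_right ?_ hS
  linarith

end RowRegular

end EdgeSwitch

theorem stmt_13_general {n d : ℕ} (hd : 2 ≤ d) (hnd : 2 ≤ n * d) (F : Finset (Fin n × Fin n))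
    (hne : Nonempty (OmegaType (fun _ : Fin n => d) (fun _ : Fin n => d) F))
    (lamE : ℕ → ℝ)
    (hEroots : (Pedge (fun _ : Fin n => d) (fun _ : Fin n => d) F (n * d)).charpoly.roots
      = (Multiset.range
          (Fintype.card (OmegaType (fun _ : Fin n => d) (fun _ : Fin n => d) F))).map lamE) :
    -(1 / (d : ℝ) + 1 / (4 * (d : ℝ) ^ 2)) ≤
        lamE (Fintype.card (OmegaType (fun _ : Fin n => d) (fun _ : Fin n => d) F) - 1) ∧
    (1 + lamE (Fintype.card (OmegaType (fun _ : Fin n => d) (fun _ : Fin n => d) F) - 1))⁻¹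
        ≤ 4 * (d : ℝ) ^ 2 / (4 * (d : ℝ) ^ 2 - 4 * (d : ℝ) - 1) ∧
    4 * (d : ℝ) ^ 2 / (4 * (d : ℝ) ^ 2 - 4 * (d : ℝ) - 1) ≤ 5 / 2 := by
  set N := Fintype.card (OmegaType (fun _ : Fin n => d) (fun _ : Fin n => d) F)
  have hroot : (Pedge (fun _ : Fin n => d) (fun _ : Fin n => d) F (n * d)).charpoly.IsRoot
      (lamE (N - 1)) := by
    have hN : N - 1 < N := Nat.sub_one_lt (Fintype.card_pos_iff.mpr hne).ne'
    refine (Polynomial.mem_roots'.mp ?_).2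
    rw [hEroots]
    exact Multiset.mem_map_of_mem lamE (Multiset.mem_range.mpr hN)
  have hlow : -(1 / (d : ℝ)) ≤ lamE (N - 1) :=
    (EdgeSwitch.neg_inv_le_one_sub_inv_choose_two_mul (by omega) hnd).trans
      (EdgeSwitch.le_of_isRoot_charpoly_Pedge hroot)
  have hdR : (2 : ℝ) ≤ d := by exact_mod_cast hd
  have hden : 0 < 4 * (d : ℝ) ^ 2 - 4 * d - 1 := by nlinarith
  refine ⟨by linarith [show 0 ≤ 1 / (4 * (d : ℝ) ^ 2) by positivity], ?_, ?_⟩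
  · rw [← inv_div]
    refine inv_anti₀ (by positivity) ((div_le_iff₀ (by positivity)).mpr ?_)
    have hdl : -1 ≤ (d : ℝ) * lamE (N - 1) :=
      (div_le_iff₀' (by positivity)).mp (by rwa [← neg_div] at hlow)
    nlinarith
  · rw [div_le_iff₀ hden]
    nlinarith

/-- for `Ω(n,d,F)` the `d`-regular square `n × n` binary matrices with
forbidden entries `F` (`d ≥ 2`, `ρ = nd ≥ 2`), the smallest eigenvalue
`λ_{|Ω|-1}^edge` of the edge-switch transition matrix satisfies
`λ_{|Ω|-1}^edge ≥ -(1/d + 1/(4d²))`, hence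
`(1 + λ_{|Ω|-1}^edge)⁻¹ ≤ 4d²/(4d² - 4d - 1) ≤ 5/2`. -/
theorem stmt_13 {n d : ℕ} (hd : 2 ≤ d) (hnd : 2 ≤ n * d) (F : Finset (Fin n × Fin n))
    (hne : Nonempty (OmegaType (fun _ : Fin n => d) (fun _ : Fin n => d) F))
    (lamE : ℕ → ℝ) (hEanti : Antitone lamE) (hE0 : lamE 0 = 1)
    (hEroots : (Pedge (fun _ : Fin n => d) (fun _ : Fin n => d) F (n * d)).charpoly.roots
      = (Multiset.range
          (Fintype.card (OmegaType (fun _ : Fin n => d) (fun _ : Fin n => d) F))).map lamE) :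
    -(1 / (d : ℝ) + 1 / (4 * (d : ℝ) ^ 2)) ≤
        lamE (Fintype.card (OmegaType (fun _ : Fin n => d) (fun _ : Fin n => d) F) - 1) ∧
    (1 + lamE (Fintype.card (OmegaType (fun _ : Fin n => d) (fun _ : Fin n => d) F) - 1))⁻¹
        ≤ 4 * (d : ℝ) ^ 2 / (4 * (d : ℝ) ^ 2 - 4 * (d : ℝ) - 1) ∧
    4 * (d : ℝ) ^ 2 / (4 * (d : ℝ) ^ 2 - 4 * (d : ℝ) - 1) ≤ 5 / 2 :=
  stmt_13_general hd hnd F hne lamE hEroots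
end

section
/- For all natural numbers n ≥ 1 and d ≥ 1 with nd ≥ 2, the real inequality 1 − (2d+1)²·n(n−1)/(4·nd·(nd−1)) ≥ −(1/d + 1/(4d²)) holds. -/
/-- for all natural numbers `n ≥ 1`, `d ≥ 1` with `nd ≥ 2`,
`1 - (2d+1)² n(n-1) / (4 · nd · (nd-1)) ≥ -(1/d + 1/(4d²))`. -/
theorem stmt_16 (n d : ℕ) (hn : 1 ≤ n) (hd : 1 ≤ d) (hnd : 2 ≤ n * d) :
    -(1 / (d : ℝ) + 1 / (4 * (d : ℝ) ^ 2)) ≤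
      1 - (2 * (d : ℝ) + 1) ^ 2 * (n : ℝ) * ((n : ℝ) - 1) /
        (4 * ((n : ℝ) * (d : ℝ)) * ((n : ℝ) * (d : ℝ) - 1)) := by
  have hN : (1:ℝ) ≤ (n:ℝ) := by exact_mod_cast hn
  have hD : (1:ℝ) ≤ (d:ℝ) := by exact_mod_cast hd
  have hND : (2:ℝ) ≤ (n:ℝ) * (d:ℝ) := by exact_mod_cast hnd
  have hden : (0:ℝ) < 4 * ((n:ℝ) * (d:ℝ)) * ((n:ℝ) * (d:ℝ) - 1) := by nlinarith
  have hd2 : (0:ℝ) < 4 * (d:ℝ) ^ 2 := by nlinarith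
  have key : (2 * (d:ℝ) + 1) ^ 2 * (n:ℝ) * ((n:ℝ) - 1) /
        (4 * ((n:ℝ) * (d:ℝ)) * ((n:ℝ) * (d:ℝ) - 1)) ≤
      (2 * (d:ℝ) + 1) ^ 2 / (4 * (d:ℝ) ^ 2) := by
    rw [div_le_div_iff₀ hden hd2]
    nlinarith [mul_nonneg (mul_nonneg (mul_nonneg
      (sq_nonneg (2 * (d:ℝ) + 1)) (by linarith : (0:ℝ) ≤ (n:ℝ)))
      (by linarith : (0:ℝ) ≤ (d:ℝ))) (by linarith : (0:ℝ) ≤ (d:ℝ) - 1)]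
  have heq : (2 * (d:ℝ) + 1) ^ 2 / (4 * (d:ℝ) ^ 2)
      = 1 + (1 / (d:ℝ) + 1 / (4 * (d:ℝ) ^ 2)) := by
    have : (d:ℝ) ≠ 0 := by linarith
    field_simp
    ring
  linarith
end
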